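/- arXiv:2303.06838 — 3 statements merged into one kernel-verified Lean document; each statement's English description precedes it below -/
import Mathlib

section
/- Suppose the per-iteration oracle cost is oc(α) = c_f·α^{−4} + c_g·α^{−2} for constants c_f, c_g ≥ 0, and that γ > (2q)^{1/4}. Then there exists a constant C > 0, depending only on p and γ, such that for every integer n ≥ 2, E[ TOC(min{T, n}) ] ≤ C · n · (log n) · ( (c_f/ᾱ⁴) · n^{4·log(1/γ)/log(p/q)} + (c_g/ᾱ²) · n^{2·log(1/γ)/log(p/q)} ). -/
/-!
Write `Y k = (ᾱ / A k) ^ e` and `c = γ ^ e`. While `A k ≤ ᾱ`, a successful step multiplies `Y` by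
at most `c` (plus `1` when the step size is capped at `αmax`) and a failed one multiplies it by
`c⁻¹`; the conditional success probability `≥ p` therefore gives
`E[Y (k+1); k+1 ≤ T] ≤ ρ E[Y k; k ≤ T] + 1 + c⁻¹` with `ρ = (1 - p) c⁻¹ + p c`, and
`A k > ᾱ` only contributes a constant since then `Y k ≤ 1`. If `c > (1 - p) / p` then `ρ < 1`, so
`E[Y k; k ≤ T]` is bounded uniformly in `k`, and `E[TOC(min(T, n))] = O(n)`, which is stronger
than the claim. The hypothesis `γ > (2q)^{1/4}` gives `γ ^ 4 > q / p`, which covers `e = 4` and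
`e = 2`.
-/
open MeasureTheory ProbabilityTheory Filter

lemma le_of_forall_le_mul_add {z : ℕ → ℝ} {ρ b M : ℝ} (hρ : 0 ≤ ρ) (h0 : z 0 ≤ M)
    (hM : ρ * M + b ≤ M) (h : ∀ k, z (k + 1) ≤ ρ * z k + b) (k : ℕ) : z k ≤ M := by
  induction k with
  | zero => exact h0
  | succ k ih => linarith [h k, mul_le_mul_of_nonneg_left ih hρ]

/-- With `c = γ ^ e`, the expected factor by which `(ᾱ / α) ^ e` grows in one step of a step size
`α ≤ ᾱ` that is divided by `γ` with probability `p` and multiplied by `γ` otherwise. -/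
noncomputable def driftFactor (p c : ℝ) : ℝ := (1 - p) * c⁻¹ + p * c

lemma driftFactor_nonneg {p c : ℝ} (hp0 : 0 ≤ p) (hp1 : p ≤ 1) (hc : 0 ≤ c) :
    0 ≤ driftFactor p c := by
  have := sub_nonneg.2 hp1
  unfold driftFactor
  positivity

lemma driftFactor_lt_one {p c : ℝ} (hp : 0 < p) (hc0 : 0 < c) (hc1 : c < 1)
    (hpc : (1 - p) / p < c) : driftFactor p c < 1 := by
  have hqc : 1 - p < p * c := by rwa [div_lt_iff₀ hp, mul_comm] at hpc
  rw [driftFactor, ← div_eq_mul_inv, div_add' _ _ _ hc0.ne', div_lt_one hc0]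
  nlinarith [mul_pos (sub_pos.2 hc1) (sub_pos.2 hqc)]

/-- The fixed point `b / (1 - ρ)` of `z ↦ ρ z + b` with `b = 1 + c⁻¹`, plus one for `z 0 ≤ 1`. -/
noncomputable def momentBound (p c : ℝ) : ℝ := 1 + (1 + c⁻¹) / (1 - driftFactor p c)

lemma one_le_momentBound {p c : ℝ} (hc : 0 ≤ c) (hρ : driftFactor p c < 1) :
    1 ≤ momentBound p c := by
  have := sub_pos.2 hρ
  unfold momentBound
  simp only [le_add_iff_nonneg_right]
  positivity

lemma driftFactor_mul_momentBound_add_le {p c : ℝ} (hρ : driftFactor p c < 1) :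
    driftFactor p c * momentBound p c + (1 + c⁻¹) ≤ momentBound p c := by
  have hρ' := sub_pos.2 hρ
  have key : driftFactor p c * ((1 + c⁻¹) / (1 - driftFactor p c)) + (1 + c⁻¹)
      = (1 + c⁻¹) / (1 - driftFactor p c) := by
    field_simp
    ring
  unfold momentBound
  nlinarith

lemma div_mul_pow (ᾱ γ a : ℝ) (e : ℕ) : (ᾱ / (γ * a)) ^ e = (γ ^ e)⁻¹ * (ᾱ / a) ^ e := by
  ring

lemma div_min_pow_le {ᾱ αmax γ a : ℝ} (e : ℕ) (hᾱ : 0 ≤ ᾱ) (hαmax : ᾱ ≤ αmax) (hγ : 0 < γ)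
    (ha : 0 ≤ a) : (ᾱ / min αmax (γ⁻¹ * a)) ^ e ≤ γ ^ e * (ᾱ / a) ^ e + 1 := by
  rcases min_choice αmax (γ⁻¹ * a) with h | h <;> rw [h]
  · have : (ᾱ / αmax) ^ e ≤ 1 :=
      pow_le_one₀ (div_nonneg hᾱ (hᾱ.trans hαmax)) (div_le_one_of_le₀ hαmax (hᾱ.trans hαmax))
    have : 0 ≤ γ ^ e * (ᾱ / a) ^ e := by positivity
    linarith
  · have : (ᾱ / (γ⁻¹ * a)) ^ e = γ ^ e * (ᾱ / a) ^ e := by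
      rw [div_mul_pow, inv_pow, inv_inv]
    linarith

lemma div_pow_le_of_step {ᾱ αmax γ a a' : ℝ} (e : ℕ) (hᾱ : 0 ≤ ᾱ) (hαmax : ᾱ ≤ αmax) (hγ : 0 < γ)
    (ha : 0 ≤ a) (h : a' = γ * a ∨ a' = min αmax (γ⁻¹ * a)) :
    (ᾱ / a') ^ e ≤ (γ ^ e)⁻¹ * (ᾱ / a) ^ e -
      ((γ ^ e)⁻¹ - γ ^ e) * ((ᾱ / a) ^ e * if a' = min αmax (γ⁻¹ * a) then 1 else 0) + 1 := by
  by_cases hup : a' = min αmax (γ⁻¹ * a)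
  · rw [if_pos hup, hup]
    linarith [div_min_pow_le e hᾱ hαmax hγ ha]
  · rw [if_neg hup, h.resolve_right hup, div_mul_pow]
    linarith

lemma le_inv_self_of_le_one {c : ℝ} (hc0 : 0 < c) (hc1 : c ≤ 1) : c ≤ c⁻¹ :=
  hc1.trans ((one_le_inv₀ hc0).2 hc1)

lemma mul_setIntegral_le_setIntegral_mul {Ω : Type*} {m m0 : MeasurableSpace Ω} {μ : Measure Ω}
    (hm : m ≤ m0) [SigmaFinite (μ.trim hm)] {f g : Ω → ℝ} {s : Set Ω} {p : ℝ}
    (hs : MeasurableSet[m] s) (hf : StronglyMeasurable[m] f) (hf0 : 0 ≤ f) (hfi : Integrable f μ)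
    (hfg : Integrable (f * g) μ) (hg : Integrable g μ) (hpg : ∀ᵐ x ∂μ, x ∈ s → p ≤ μ[g | m] x) :
    p * ∫ x in s, f x ∂μ ≤ ∫ x in s, f x * g x ∂μ := by
  have hpull : μ[f * g | m] =ᵐ[μ] f * μ[g | m] := condExp_mul_of_stronglyMeasurable_left hf hfg hg
  calc p * ∫ x in s, f x ∂μ = ∫ x in s, p * f x ∂μ := (integral_const_mul p f).symm
    _ ≤ ∫ x in s, f x * μ[g | m] x ∂μ := by
      refine setIntegral_mono_on_ae (hfi.const_mul p).integrableOn
        (integrable_condExp.congr hpull).integrableOn (hm s hs) ?_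
      filter_upwards [hpg] with x hx hxs
      rw [mul_comm]
      exact mul_le_mul_of_nonneg_left (hx hxs) (hf0 x)
    _ = ∫ x in s, μ[f * g | m] x ∂μ :=
      setIntegral_congr_ae (hm s hs) (hpull.mono fun x hx _ => hx.symm)
    _ = ∫ x in s, f x * g x ∂μ := setIntegral_condExp hm hfg hs

structure IsStepSizeProcess {Ω : Type*} {mΩ : MeasurableSpace Ω} (μ : Measure Ω)
    (F : Filtration ℕ mΩ) (A : ℕ → Ω → ℝ) (T : Ω → ℕ) (p γ ᾱ αmax : ℝ) : Prop where
  stronglyAdapted : StronglyAdapted F A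
  pos : ∀ k x, 0 < A k x
  isStoppingTime : IsStoppingTime F (fun x => (T x : WithTop ℕ))
  le_zero : ∀ x, ᾱ ≤ A 0 x
  le_max : ᾱ ≤ αmax
  step : ∀ k, ∀ᵐ x ∂μ, A (k + 1) x = γ * A k x ∨ A (k + 1) x = min αmax (γ⁻¹ * A k x)
  le_condExp : ∀ k, ∀ᵐ x ∂μ, (k < T x ∧ A k x ≤ ᾱ) →
    p ≤ (μ[Set.indicator {x' | A (k + 1) x' = min αmax (γ⁻¹ * A k x')} (fun _ => (1:ℝ)) | F k]) x

namespace IsStepSizeProcess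

variable {Ω : Type*} {mΩ : MeasurableSpace Ω} {μ : Measure Ω} {F : Filtration ℕ mΩ}
  {A : ℕ → Ω → ℝ} {T : Ω → ℕ} {p γ ᾱ αmax : ℝ}

lemma measurableSet_gt (hX : IsStepSizeProcess μ F A T p γ ᾱ αmax) (k : ℕ) :
    MeasurableSet[F k] {x | k < T x} := by
  simpa using hX.isStoppingTime.measurableSet_gt k

lemma measurableSet_ge (hX : IsStepSizeProcess μ F A T p γ ᾱ αmax) (k : ℕ) :
    MeasurableSet {x | k ≤ T x} := by
  simpa using F.le k _ (hX.isStoppingTime.measurableSet_ge k)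

lemma measurableSet_gt_and_le (hX : IsStepSizeProcess μ F A T p γ ᾱ αmax) (k : ℕ) :
    MeasurableSet[F k] {x | k < T x ∧ A k x ≤ ᾱ} :=
  (hX.measurableSet_gt k).inter
    (measurableSet_le (hX.stronglyAdapted k).measurable measurable_const)

lemma measurableSet_eq_min (hX : IsStepSizeProcess μ F A T p γ ᾱ αmax) (k : ℕ) :
    MeasurableSet {x | A (k + 1) x = min αmax (γ⁻¹ * A k x)} := by
  have hA := fun k => ((hX.stronglyAdapted k).mono (F.le k)).measurable
  exact measurableSet_eq_fun (hA (k + 1)) (measurable_const.min ((hA k).const_mul γ⁻¹))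

lemma stronglyMeasurable_div_pow (hX : IsStepSizeProcess μ F A T p γ ᾱ αmax) (e k : ℕ) :
    StronglyMeasurable[F k] (fun x => (ᾱ / A k x) ^ e) :=
  ((measurable_const.div (hX.stronglyAdapted k).measurable).pow_const e).stronglyMeasurable

lemma mul_pow_le (hX : IsStepSizeProcess μ F A T p γ ᾱ αmax) (hᾱ : 0 ≤ ᾱ) (hγ0 : 0 < γ)
    (hγ1 : γ ≤ 1) (k : ℕ) : ∀ᵐ x ∂μ, ᾱ * γ ^ k ≤ A k x := by
  induction k with
  | zero => exact ae_of_all _ fun x => by simpa using hX.le_zero x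
  | succ k ih =>
    filter_upwards [ih, hX.step k] with x hA hstep
    have hdecay : ᾱ * γ ^ (k + 1) ≤ ᾱ * γ ^ k :=
      mul_le_mul_of_nonneg_left (pow_le_pow_of_le_one hγ0.le hγ1 k.le_succ) hᾱ
    rcases hstep with h | h <;> rw [h]
    · rw [pow_succ', mul_left_comm]
      exact mul_le_mul_of_nonneg_left hA hγ0.le
    · refine le_min ?_ ?_
      · exact (mul_le_of_le_one_right hᾱ (pow_le_one₀ hγ0.le hγ1)).trans hX.le_max
      · exact hdecay.trans (hA.trans
          (le_mul_of_one_le_left (hX.pos k x).le ((one_le_inv₀ hγ0).2 hγ1)))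

lemma integrable_div_pow [IsFiniteMeasure μ] (hX : IsStepSizeProcess μ F A T p γ ᾱ αmax)
    (hᾱ : 0 < ᾱ) (hγ0 : 0 < γ) (hγ1 : γ ≤ 1) (e k : ℕ) :
    Integrable (fun x => (ᾱ / A k x) ^ e) μ := by
  refine .of_bound ((hX.stronglyMeasurable_div_pow e k).mono (F.le k)).aestronglyMeasurable
    (((γ ^ k)⁻¹) ^ e) ?_
  filter_upwards [hX.mul_pow_le hᾱ.le hγ0 hγ1 k] with x hx
  have hbound : ᾱ / A k x ≤ (γ ^ k)⁻¹ := by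
    calc ᾱ / A k x ≤ ᾱ / (ᾱ * γ ^ k) := div_le_div_of_nonneg_left hᾱ.le (by positivity) hx
      _ = (γ ^ k)⁻¹ := by field_simp
  rw [Real.norm_eq_abs, abs_of_nonneg (by have := hX.pos k x; positivity)]
  exact pow_le_pow_left₀ (div_nonneg hᾱ.le (hX.pos k x).le) hbound e

lemma indicator_div_pow_succ_le (hX : IsStepSizeProcess μ F A T p γ ᾱ αmax) (hᾱ : 0 ≤ ᾱ)
    (hγ0 : 0 < γ) (hγ1 : γ ≤ 1) (e k : ℕ) :
    ∀ᵐ x ∂μ, {x | k < T x}.indicator (fun x => (ᾱ / A (k + 1) x) ^ e) x ≤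
      {x | k < T x ∧ A k x ≤ ᾱ}.indicator (fun x => (γ ^ e)⁻¹ * (ᾱ / A k x) ^ e -
        ((γ ^ e)⁻¹ - γ ^ e) * ((ᾱ / A k x) ^ e *
          {x' | A (k + 1) x' = min αmax (γ⁻¹ * A k x')}.indicator (fun _ => (1:ℝ)) x)) x +
      (1 + (γ ^ e)⁻¹) := by
  filter_upwards [hX.step k] with x hstep
  have hsucc := div_pow_le_of_step e hᾱ hX.le_max hγ0 (hX.pos k x).le hstep
  have hc : 0 < γ ^ e := pow_pos hγ0 e
  simp only [Set.indicator_apply, Set.mem_ofPred_eq]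
  by_cases hkT : k < T x
  · by_cases hL : A k x ≤ ᾱ
    · rw [if_pos hkT, if_pos ⟨hkT, hL⟩]
      linarith [inv_nonneg.2 hc.le]
    · rw [if_pos hkT, if_neg (fun h => hL h.2)]
      -- above `ᾱ` there is no drift, but the moment is at most `1`
      have hY : 0 ≤ (ᾱ / A k x) ^ e := by have := hX.pos k x; positivity
      have hY1 : (ᾱ / A k x) ^ e ≤ 1 := pow_le_one₀ (div_nonneg hᾱ (hX.pos k x).le)
        (div_le_one_of_le₀ (not_le.1 hL).le (hX.pos k x).le)
      have hg : (0 : ℝ) ≤ if A (k + 1) x = min αmax (γ⁻¹ * A k x) then 1 else 0 := by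
        split_ifs <;> norm_num
      nlinarith [mul_nonneg (sub_nonneg.2 (le_inv_self_of_le_one hc (pow_le_one₀ hγ0.le hγ1)))
        (mul_nonneg hY hg), mul_le_mul_of_nonneg_left hY1 (inv_nonneg.2 hc.le)]
  · rw [if_neg hkT, if_neg (fun h => hkT h.1)]
    positivity

lemma setIntegral_div_pow_succ_le [IsProbabilityMeasure μ]
    (hX : IsStepSizeProcess μ F A T p γ ᾱ αmax) (hp0 : 0 ≤ p) (hp1 : p ≤ 1) (hᾱ : 0 < ᾱ)
    (hγ0 : 0 < γ) (hγ1 : γ ≤ 1) (e k : ℕ) :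
    ∫ x in {x | k + 1 ≤ T x}, (ᾱ / A (k + 1) x) ^ e ∂μ ≤
      driftFactor p (γ ^ e) * ∫ x in {x | k ≤ T x}, (ᾱ / A k x) ^ e ∂μ + (1 + (γ ^ e)⁻¹) := by
  set c := γ ^ e
  set Y := fun x => (ᾱ / A k x) ^ e
  set S := {x | k < T x ∧ A k x ≤ ᾱ}
  set U := {x' | A (k + 1) x' = min αmax (γ⁻¹ * A k x')}
  set g := U.indicator (fun _ => (1:ℝ))
  have hc : 0 < c := pow_pos hγ0 e
  have hcc : c ≤ c⁻¹ := le_inv_self_of_le_one hc (pow_le_one₀ hγ0.le hγ1)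
  have hS : MeasurableSet S := F.le k _ (hX.measurableSet_gt_and_le k)
  have hY : Integrable Y μ := hX.integrable_div_pow hᾱ hγ0 hγ1 e k
  have hg : Integrable g μ := (integrable_const 1).indicator (hX.measurableSet_eq_min k)
  have hYg : Integrable (fun x => Y x * g x) μ := by
    refine hY.mul_bdd hg.aestronglyMeasurable (c := 1) (ae_of_all _ fun x => ?_)
    by_cases hx : x ∈ U <;> simp [g, hx]
  have hdrift : Integrable (fun x => c⁻¹ * Y x - (c⁻¹ - c) * (Y x * g x)) μ :=
    (hY.const_mul _).sub (hYg.const_mul _)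
  have hcond : p * ∫ x in S, Y x ∂μ ≤ ∫ x in S, Y x * g x ∂μ :=
    mul_setIntegral_le_setIntegral_mul (F.le k) (hX.measurableSet_gt_and_le k)
      (hX.stronglyMeasurable_div_pow e k)
      (fun x => by have := hX.pos k x; positivity) hY hYg hg (hX.le_condExp k)
  have hSle : ∫ x in S, Y x ∂μ ≤ ∫ x in {x | k ≤ T x}, Y x ∂μ :=
    setIntegral_mono_set hY.integrableOn (ae_of_all _ fun x => by have := hX.pos k x; positivity)
      (Eventually.of_forall fun x hx => hx.1.le)
  calc ∫ x in {x | k + 1 ≤ T x}, (ᾱ / A (k + 1) x) ^ e ∂μ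
      = ∫ x, {x | k < T x}.indicator (fun x => (ᾱ / A (k + 1) x) ^ e) x ∂μ :=
        (integral_indicator (F.le k _ (hX.measurableSet_gt k))).symm
    _ ≤ ∫ x, (S.indicator (fun x => c⁻¹ * Y x - (c⁻¹ - c) * (Y x * g x)) x + (1 + c⁻¹)) ∂μ :=
        integral_mono_ae
          ((hX.integrable_div_pow hᾱ hγ0 hγ1 e (k + 1)).indicator
            (F.le k _ (hX.measurableSet_gt k)))
          ((hdrift.indicator hS).add (integrable_const _))
          (hX.indicator_div_pow_succ_le hᾱ.le hγ0 hγ1 e k)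
    _ = c⁻¹ * ∫ x in S, Y x ∂μ - (c⁻¹ - c) * ∫ x in S, Y x * g x ∂μ + (1 + c⁻¹) := by
        rw [integral_add (hdrift.indicator hS) (integrable_const _), integral_indicator hS,
          integral_sub (hY.const_mul _).integrableOn (hYg.const_mul (c⁻¹ - c)).integrableOn,
          integral_const_mul, integral_const_mul]
        simp
    _ ≤ driftFactor p c * ∫ x in S, Y x ∂μ + (1 + c⁻¹) := by
        unfold driftFactor
        nlinarith [mul_le_mul_of_nonneg_left hcond (sub_nonneg.2 hcc)]
    _ ≤ driftFactor p c * ∫ x in {x | k ≤ T x}, Y x ∂μ + (1 + c⁻¹) := by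
        gcongr
        exact driftFactor_nonneg hp0 hp1 hc.le

lemma setIntegral_div_pow_le_momentBound [IsProbabilityMeasure μ]
    (hX : IsStepSizeProcess μ F A T p γ ᾱ αmax) (hp0 : 0 < p) (hp1 : p ≤ 1) (hᾱ : 0 < ᾱ)
    (hγ0 : 0 < γ) (hγ1 : γ < 1) {e : ℕ} (he : e ≠ 0) (hpe : (1 - p) / p < γ ^ e) (k : ℕ) :
    ∫ x in {x | k ≤ T x}, (ᾱ / A k x) ^ e ∂μ ≤ momentBound p (γ ^ e) := by
  have hc : 0 < γ ^ e := pow_pos hγ0 e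
  have hρ : driftFactor p (γ ^ e) < 1 := driftFactor_lt_one hp0 hc (pow_lt_one₀ hγ0.le hγ1 he) hpe
  refine le_of_forall_le_mul_add (z := fun k => ∫ x in {x | k ≤ T x}, (ᾱ / A k x) ^ e ∂μ)
    (driftFactor_nonneg hp0.le hp1 hc.le) ?_ (driftFactor_mul_momentBound_add_le hρ)
    (hX.setIntegral_div_pow_succ_le hp0.le hp1 hᾱ hγ0 hγ1.le e) k
  have hY0 : ∀ x, (ᾱ / A 0 x) ^ e ≤ 1 := fun x =>
    pow_le_one₀ (div_nonneg hᾱ.le (hX.pos 0 x).le)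
      (div_le_one_of_le₀ (hX.le_zero x) (hX.pos 0 x).le)
  calc ∫ x in {x | 0 ≤ T x}, (ᾱ / A 0 x) ^ e ∂μ ≤ ∫ _, (1 : ℝ) ∂μ := by
        simp only [zero_le, Set.ofPred_true, Measure.restrict_univ]
        exact integral_mono (hX.integrable_div_pow hᾱ hγ0 hγ1.le e 0) (integrable_const 1) hY0
    _ = 1 := by simp
    _ ≤ momentBound p (γ ^ e) := one_le_momentBound hc.le hρ

lemma div_pow_add_div_pow_eq {ᾱ : ℝ} (hᾱ : ᾱ ≠ 0) (c_f c_g a : ℝ) :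
    c_f / a ^ 4 + c_g / a ^ 2 = c_f / ᾱ ^ 4 * (ᾱ / a) ^ 4 + c_g / ᾱ ^ 2 * (ᾱ / a) ^ 2 := by
  rcases eq_or_ne a 0 with rfl | ha
  · simp
  · field_simp

lemma integrable_cost [IsFiniteMeasure μ] (hX : IsStepSizeProcess μ F A T p γ ᾱ αmax)
    (hᾱ : 0 < ᾱ) (hγ0 : 0 < γ) (hγ1 : γ ≤ 1) (c_f c_g : ℝ) (k : ℕ) :
    Integrable (fun x => c_f / A k x ^ 4 + c_g / A k x ^ 2) μ := by
  simp_rw [div_pow_add_div_pow_eq hᾱ.ne']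
  exact ((hX.integrable_div_pow hᾱ hγ0 hγ1 4 k).const_mul _).add
    ((hX.integrable_div_pow hᾱ hγ0 hγ1 2 k).const_mul _)

lemma setIntegral_cost_le [IsProbabilityMeasure μ] (hX : IsStepSizeProcess μ F A T p γ ᾱ αmax)
    (hp0 : 0 < p) (hp1 : p ≤ 1) (hᾱ : 0 < ᾱ) (hγ0 : 0 < γ) (hγ1 : γ < 1)
    (hpγ : (1 - p) / p < γ ^ 4) {c_f c_g : ℝ} (hcf : 0 ≤ c_f) (hcg : 0 ≤ c_g) (k : ℕ) :
    ∫ x in {x | k ≤ T x}, (c_f / A k x ^ 4 + c_g / A k x ^ 2) ∂μ ≤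
      max (momentBound p (γ ^ 4)) (momentBound p (γ ^ 2)) * (c_f / ᾱ ^ 4 + c_g / ᾱ ^ 2) := by
  have hpγ2 : (1 - p) / p < γ ^ 2 := hpγ.trans_le (pow_le_pow_of_le_one hγ0.le hγ1.le (by norm_num))
  have h4 := hX.setIntegral_div_pow_le_momentBound hp0 hp1 hᾱ hγ0 hγ1 four_ne_zero hpγ k
  have h2 := hX.setIntegral_div_pow_le_momentBound hp0 hp1 hᾱ hγ0 hγ1 two_ne_zero hpγ2 k
  conv_lhs => simp only [div_pow_add_div_pow_eq hᾱ.ne']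
  rw [integral_add ((hX.integrable_div_pow hᾱ hγ0 hγ1.le 4 k).const_mul _).integrableOn
      ((hX.integrable_div_pow hᾱ hγ0 hγ1.le 2 k).const_mul _).integrableOn,
    integral_const_mul, integral_const_mul]
  have : 0 ≤ c_f / ᾱ ^ 4 := by positivity
  have : 0 ≤ c_g / ᾱ ^ 2 := by positivity
  nlinarith [le_max_left (momentBound p (γ ^ 4)) (momentBound p (γ ^ 2)),
    le_max_right (momentBound p (γ ^ 4)) (momentBound p (γ ^ 2))]

end IsStepSizeProcess

lemma Finset.sum_Icc_min_eq_sum_ite {M : Type*} [AddCommMonoid M] (f : ℕ → M) (t n : ℕ) :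
    ∑ k ∈ Finset.Icc 1 (min t n), f k = ∑ k ∈ Finset.Icc 1 n, if k ≤ t then f k else 0 := by
  rw [← Finset.sum_filter]
  congr 1
  ext k
  simp only [Finset.mem_Icc, Finset.mem_filter, le_min_iff]
  omega

lemma integral_sum_Icc_min {Ω : Type*} {mΩ : MeasurableSpace Ω} {μ : Measure Ω} {T : Ω → ℕ}
    {f : ℕ → Ω → ℝ} (hT : ∀ k, MeasurableSet {x | k ≤ T x}) (hf : ∀ k, Integrable (f k) μ)
    (n : ℕ) :
    ∫ x, ∑ k ∈ Finset.Icc 1 (min (T x) n), f k x ∂μ =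
      ∑ k ∈ Finset.Icc 1 n, ∫ x in {x | k ≤ T x}, f k x ∂μ := by
  have hsum : ∀ x, ∑ k ∈ Finset.Icc 1 (min (T x) n), f k x =
      ∑ k ∈ Finset.Icc 1 n, {x | k ≤ T x}.indicator (f k) x := fun x => by
    simp [Finset.sum_Icc_min_eq_sum_ite, Set.indicator_apply]
  rw [integral_congr_ae (ae_of_all _ hsum),
    integral_finsetSum _ fun k _ => (hf k).indicator (hT k)]
  exact Finset.sum_congr rfl fun k _ => integral_indicator (hT k)

lemma mul_le_div_log_two_mul {K a b s t x : ℝ} (hK : 0 ≤ K) (ha : 0 ≤ a) (hb : 0 ≤ b)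
    (hs : 0 ≤ s) (ht : 0 ≤ t) (hx : 2 ≤ x) :
    x * (K * (a + b)) ≤ K / Real.log 2 * x * Real.log x * (a * x ^ s + b * x ^ t) := by
  have hlog2 : 0 < Real.log 2 := Real.log_pos one_lt_two
  have hlog : Real.log 2 ≤ Real.log x := Real.log_le_log two_pos hx
  have hxs : 1 ≤ x ^ s := Real.one_le_rpow (by linarith) hs
  have hxt : 1 ≤ x ^ t := Real.one_le_rpow (by linarith) ht
  have hab : Real.log 2 * (a + b) ≤ Real.log x * (a * x ^ s + b * x ^ t) :=
    mul_le_mul hlog (by nlinarith) (by positivity) (Real.log_nonneg (by linarith))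
  calc x * (K * (a + b)) = K / Real.log 2 * x * (Real.log 2 * (a + b)) := by field_simp
    _ ≤ K / Real.log 2 * x * (Real.log x * (a * x ^ s + b * x ^ t)) := by
      have : 0 ≤ x := by linarith
      gcongr
    _ = K / Real.log 2 * x * Real.log x * (a * x ^ s + b * x ^ t) := by ring

lemma div_lt_pow_four_of_rpow_lt {p γ : ℝ} (hp : 1 / 2 < p) (hp1 : p < 1)
    (h : (2 * (1 - p)) ^ ((1 : ℝ) / 4) < γ) : (1 - p) / p < γ ^ 4 := by
  have hq : 0 ≤ 2 * (1 - p) := by linarith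
  have h2q : 2 * (1 - p) < γ ^ 4 := by
    have hpow : ((2 * (1 - p)) ^ ((1 : ℝ) / 4)) ^ 4 = 2 * (1 - p) := by
      rw [← Real.rpow_natCast, ← Real.rpow_mul hq]
      norm_num
    simpa only [hpow] using pow_lt_pow_left₀ h (by positivity) four_ne_zero
  calc (1 - p) / p < 2 * (1 - p) := by rw [div_lt_iff₀ (by linarith)]; nlinarith
    _ < γ ^ 4 := h2q

/-- Expected total sample complexity of first-order STORM: with
per-iteration oracle cost `oc(α) = c_f·α⁻⁴ + c_g·α⁻²` and `γ > (2q)^{1/4}`, there is a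
constant `C > 0` depending only on `p` and `γ` such that for every admissible process
and every `n ≥ 2`,
`E[TOC(min{T, n})] ≤ C·n·(log n)·((c_f/ᾱ⁴)·n^{4 log(1/γ)/log(p/q)} + (c_g/ᾱ²)·n^{2 log(1/γ)/log(p/q)})`. -/
theorem stmt_13
    (p γ : ℝ) (hp : 1/2 < p) (hp1 : p < 1) (hγ0 : 0 < γ) (hγ1 : γ < 1)
    (hγq : (2 * (1 - p)) ^ ((1:ℝ)/4) < γ) :
    ∃ C > 0,
      ∀ (Ω : Type) (mΩ : MeasurableSpace Ω) (μ : Measure Ω),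
        IsProbabilityMeasure μ →
      ∀ (F : Filtration ℕ mΩ) (A : ℕ → Ω → ℝ) (T : Ω → ℕ)
        (ᾱ c_f c_g : ℝ) (j j' : ℤ) (αmax : ℝ),
        0 < ᾱ → 0 ≤ c_f → 0 ≤ c_g → j ≤ 0 → j' ≤ 0 → αmax = ᾱ * γ ^ j' →
        StronglyAdapted F A → (∀ k x, 0 < A k x) → IsStoppingTime F (fun x => (T x : WithTop ℕ)) →
        (∀ x, A 0 x = ᾱ * γ ^ j) →
        (∀ k, ∀ᵐ x ∂μ,
          A (k+1) x = γ * A k x ∨ A (k+1) x = min αmax (γ⁻¹ * A k x)) →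
        (∀ k, ∀ᵐ x ∂μ, (k < T x ∧ A k x ≤ ᾱ) →
          p ≤ (μ[Set.indicator {x' | A (k+1) x' = min αmax (γ⁻¹ * A k x')}
                  (fun _ => (1:ℝ)) | F k]) x) →
        ∀ n : ℕ, 2 ≤ n →
          ∫ x, (∑ k ∈ Finset.Icc 1 (min (T x) n),
              (c_f / (A k x)^4 + c_g / (A k x)^2)) ∂μ ≤
            C * n * Real.log n *
              (c_f / ᾱ^4 * (n : ℝ) ^ (4 * Real.log (1/γ) / Real.log (p/(1-p)))
                + c_g / ᾱ^2 * (n : ℝ) ^ (2 * Real.log (1/γ) / Real.log (p/(1-p)))) := by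
  have hp0 : 0 < p := by linarith
  have hpγ := div_lt_pow_four_of_rpow_lt hp hp1 hγq
  set K := max (momentBound p (γ ^ 4)) (momentBound p (γ ^ 2))
  have hK : 1 ≤ K := le_max_of_le_left (one_le_momentBound (by positivity)
    (driftFactor_lt_one hp0 (by positivity) (pow_lt_one₀ hγ0.le hγ1 four_ne_zero) hpγ))
  have hexp : ∀ e : ℝ, 0 ≤ e → 0 ≤ e * Real.log (1 / γ) / Real.log (p / (1 - p)) := fun e he =>
    div_nonneg (mul_nonneg he (Real.log_nonneg (one_le_one_div hγ0 hγ1.le)))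
      (Real.log_nonneg ((one_le_div (by linarith)).2 (by linarith)))
  refine ⟨K / Real.log 2, div_pos (by linarith) (Real.log_pos one_lt_two), ?_⟩
  intro Ω mΩ μ _ F A T ᾱ c_f c_g j j' αmax hᾱ hcf hcg hj hj' hαmax hAd hApos hT hA0 hstep hcond n hn
  have hX : IsStepSizeProcess μ F A T p γ ᾱ αmax :=
    { stronglyAdapted := hAd, pos := hApos, isStoppingTime := hT, step := hstep, le_condExp := hcond
      le_zero := fun x => (hA0 x).symm ▸
        le_mul_of_one_le_right hᾱ.le (one_le_zpow_of_nonpos₀ hγ0 hγ1.le hj)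
      le_max := hαmax.symm ▸ le_mul_of_one_le_right hᾱ.le (one_le_zpow_of_nonpos₀ hγ0 hγ1.le hj') }
  calc ∫ x, (∑ k ∈ Finset.Icc 1 (min (T x) n), (c_f / (A k x)^4 + c_g / (A k x)^2)) ∂μ
      = ∑ k ∈ Finset.Icc 1 n, ∫ x in {x | k ≤ T x}, (c_f / A k x ^ 4 + c_g / A k x ^ 2) ∂μ :=
        integral_sum_Icc_min hX.measurableSet_ge (hX.integrable_cost hᾱ hγ0 hγ1.le c_f c_g) n
    _ ≤ ∑ k ∈ Finset.Icc 1 n, K * (c_f / ᾱ ^ 4 + c_g / ᾱ ^ 2) :=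
        Finset.sum_le_sum fun k _ => hX.setIntegral_cost_le hp0 hp1.le hᾱ hγ0 hγ1 hpγ hcf hcg k
    _ = n * (K * (c_f / ᾱ ^ 4 + c_g / ᾱ ^ 2)) := by simp
    _ ≤ _ := mul_le_div_log_two_mul (by linarith) (by positivity) (by positivity)
        (hexp 4 (by norm_num)) (hexp 2 (by norm_num)) (by exact_mod_cast hn)
end

section
/- Suppose the per-iteration oracle cost is oc(α) = c_f·α^{−4} + c_g·α^{−2} for constants c_f, c_g ≥ 0, and let c' > 1 be a constant. Then there exists a constant C > 0, depending only on p and c', such that for every integer n ≥ 2, if γ ≥ max{ (2q)^{1/4}, (q/p)^{log(c')/log n} } (so that n^{log(1/γ)/log(p/q)} ≤ c'), then E[ TOC(min{T, n}) ] ≤ C · n · (log n) · ( c_f/ᾱ⁴ + c_g/ᾱ² ). -/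
/-!
Write `A_k = ᾱ γ^(e_k)` with `e_k ∈ ℤ`, `e_k ≤ k`, and weigh the state by `W_k = max 1 (R^(e_k))`,
`R = p/(1-p)`. Below `ᾱ` a step down multiplies the weight by `R`, while a step up, which has
conditional probability at least `p`, divides it by `R` up to the cut-off at `1`; since
`p/R + (1-p) R = 1`, the expected weight before `T` grows by at most `1` per iteration, so
`E[W_k; k ≤ T] ≤ k + 1`. The two lower bounds on `γ` say that `κ = log_{1/γ} R` satisfies `κ ≥ 4`
and `c'^κ ≥ n`, which turns into `(ᾱ/A_k)^4 ≤ c'^4 (1 + W_k/n)`. Summing over `k ≤ n` bounds the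
expected cost by `3 c'^4 n oc(ᾱ)`.
-/

open MeasureTheory ProbabilityTheory

-- For `a = ᾱ γ^e` this is `max 1 (R^e)`.
noncomputable def stepWeight (γ R ᾱ a : ℝ) : ℝ := max 1 ((ᾱ / a) ^ Real.logb γ⁻¹ R)

noncomputable def oracleCost (c_f c_g a : ℝ) : ℝ := c_f / a ^ 4 + c_g / a ^ 2

section StepWeight

variable {γ R ᾱ a : ℝ}

lemma inv_rpow_logb_inv (hγ0 : 0 < γ) (hγ1 : γ < 1) (hR : 0 < R) : γ⁻¹ ^ Real.logb γ⁻¹ R = R :=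
  Real.rpow_logb (inv_pos.2 hγ0) (one_lt_inv₀ hγ0 |>.2 hγ1).ne' hR

lemma logb_inv_nonneg (hγ0 : 0 < γ) (hγ1 : γ < 1) (hR : 1 ≤ R) : 0 ≤ Real.logb γ⁻¹ R :=
  Real.logb_nonneg ((one_lt_inv₀ hγ0).2 hγ1) hR

lemma one_le_stepWeight : 1 ≤ stepWeight γ R ᾱ a := le_max_left _ _

lemma stepWeight_eq_one (hγ0 : 0 < γ) (hγ1 : γ < 1) (hR : 1 ≤ R) (hᾱ : 0 < ᾱ) (h : ᾱ ≤ a) :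
    stepWeight γ R ᾱ a = 1 :=
  max_eq_left <| Real.rpow_le_one (div_nonneg hᾱ.le (hᾱ.le.trans h))
    ((div_le_one (hᾱ.trans_le h)).2 h) (logb_inv_nonneg hγ0 hγ1 hR)

lemma stepWeight_mul_le (hγ0 : 0 < γ) (hγ1 : γ < 1) (hR : 1 ≤ R) (hᾱ : 0 < ᾱ) (ha : 0 < a) :
    stepWeight γ R ᾱ (γ * a) ≤ R * stepWeight γ R ᾱ a := by
  have : (ᾱ / (γ * a)) ^ Real.logb γ⁻¹ R = R * (ᾱ / a) ^ Real.logb γ⁻¹ R := by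
    rw [show ᾱ / (γ * a) = γ⁻¹ * (ᾱ / a) by field_simp, Real.mul_rpow (by positivity) (by positivity),
      inv_rpow_logb_inv hγ0 hγ1 (by linarith)]
  rw [stepWeight, stepWeight, this, mul_max_of_nonneg _ _ (by linarith), mul_one]
  exact max_le_max_right _ hR

lemma stepWeight_inv_mul_le (hγ0 : 0 < γ) (hγ1 : γ < 1) (hR : 1 ≤ R) (hᾱ : 0 < ᾱ) (ha : 0 < a) :
    stepWeight γ R ᾱ (γ⁻¹ * a) ≤ stepWeight γ R ᾱ a * R⁻¹ + 1 := by
  have : (ᾱ / (γ⁻¹ * a)) ^ Real.logb γ⁻¹ R = (ᾱ / a) ^ Real.logb γ⁻¹ R * R⁻¹ := by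
    rw [show ᾱ / (γ⁻¹ * a) = (ᾱ / a) * γ⁻¹⁻¹ by field_simp, Real.mul_rpow (by positivity) (by positivity),
      Real.inv_rpow (by positivity), inv_rpow_logb_inv hγ0 hγ1 (by linarith)]
  rw [stepWeight, this]
  have hR' : 0 ≤ R⁻¹ := inv_nonneg.2 (zero_le_one.trans hR)
  refine max_le (le_add_of_nonneg_left (mul_nonneg (zero_le_one.trans one_le_stepWeight) hR')) ?_
  have := mul_le_mul_of_nonneg_right (le_max_right 1 ((ᾱ / a) ^ Real.logb γ⁻¹ R)) hR'
  rw [← stepWeight] at this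
  linarith

lemma stepWeight_min_le (hγ0 : 0 < γ) (hγ1 : γ < 1) (hR : 1 ≤ R) (hᾱ : 0 < ᾱ) (ha : 0 < a)
    {αmax : ℝ} (hαmax : ᾱ ≤ αmax) :
    stepWeight γ R ᾱ (min αmax (γ⁻¹ * a)) ≤ stepWeight γ R ᾱ a * R⁻¹ + 1 := by
  rcases min_choice αmax (γ⁻¹ * a) with h | h <;> rw [h]
  · rw [stepWeight_eq_one hγ0 hγ1 hR hᾱ hαmax]
    exact le_add_of_nonneg_left
      (mul_nonneg (zero_le_one.trans one_le_stepWeight) (inv_nonneg.2 (zero_le_one.trans hR)))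
  · exact stepWeight_inv_mul_le hγ0 hγ1 hR hᾱ ha

lemma stepWeight_le_pow (hγ0 : 0 < γ) (hγ1 : γ < 1) (hR : 1 ≤ R) (hᾱ : 0 < ᾱ) (k : ℕ)
    (h : ᾱ * γ ^ k ≤ a) : stepWeight γ R ᾱ a ≤ R ^ k := by
  have ha : 0 < a := lt_of_lt_of_le (by positivity) h
  have hle : ᾱ / a ≤ γ⁻¹ ^ k := by
    rw [div_le_iff₀ ha, inv_pow, ← div_eq_inv_mul, le_div_iff₀ (by positivity)]
    linarith
  refine max_le (one_le_pow₀ hR) ?_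
  calc (ᾱ / a) ^ Real.logb γ⁻¹ R ≤ (γ⁻¹ ^ k) ^ Real.logb γ⁻¹ R :=
        Real.rpow_le_rpow (by positivity) hle (logb_inv_nonneg hγ0 hγ1 hR)
    _ = R ^ k := by
        rw [← Real.rpow_natCast, ← Real.rpow_mul (by positivity), mul_comm, Real.rpow_mul
          (by positivity), inv_rpow_logb_inv hγ0 hγ1 (by linarith), Real.rpow_natCast]

lemma measurable_stepWeight : Measurable (stepWeight γ R ᾱ) :=
  measurable_const.max ((measurable_const.div measurable_id).pow_const _)

end StepWeight

lemma oracleCost_le_of_le {c_f c_g a b : ℝ} (hcf : 0 ≤ c_f) (hcg : 0 ≤ c_g) (hb : 0 < b)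
    (hba : b ≤ a) : oracleCost c_f c_g a ≤ oracleCost c_f c_g b := by
  unfold oracleCost
  gcongr

lemma pow_four_le_mul_max {t c κ N : ℝ} (ht : 0 ≤ t) (hc : 1 ≤ c) (hκ : 4 ≤ κ) (hN : 0 < N)
    (hNc : N ≤ c ^ κ) : t ^ 4 ≤ c ^ 4 * max 1 (t ^ κ / N) := by
  rcases le_or_gt t c with htc | htc
  · exact (pow_le_pow_left₀ ht htc 4).trans (le_mul_of_one_le_right (by positivity) (le_max_left _ _))
  · have hc0 : 0 < c := by linarith
    have h1 : (t / c) ^ (4 : ℝ) ≤ (t / c) ^ κ :=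
      Real.rpow_le_rpow_of_exponent_le ((one_le_div hc0).2 htc.le) hκ
    rw [Real.div_rpow ht hc0.le, Real.div_rpow ht hc0.le, Real.rpow_ofNat, Real.rpow_ofNat] at h1
    calc t ^ 4 = c ^ 4 * (t ^ 4 / c ^ 4) := by field_simp
      _ ≤ c ^ 4 * (t ^ κ / c ^ κ) := by gcongr
      _ ≤ c ^ 4 * (t ^ κ / N) := by gcongr
      _ ≤ c ^ 4 * max 1 (t ^ κ / N) := by gcongr; exact le_max_right _ _

section Exponent

variable {γ R : ℝ}

lemma inv_le_logb_inv {s : ℝ} (hγ0 : 0 < γ) (hγ1 : γ < 1) (hR : 1 < R) (hs : 0 < s)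
    (h : R⁻¹ ^ s ≤ γ) : s⁻¹ ≤ Real.logb γ⁻¹ R := by
  have hlogγ : 0 < Real.log γ⁻¹ := Real.log_pos ((one_lt_inv₀ hγ0).2 hγ1)
  have hγR : γ⁻¹ ≤ R ^ s := by
    rw [Real.inv_rpow (by linarith)] at h
    exact (inv_le_comm₀ (by positivity) hγ0).1 h
  have := Real.log_le_log (inv_pos.2 hγ0) hγR
  rw [Real.log_rpow (by linarith)] at this
  rw [Real.logb, le_div_iff₀ hlogγ, inv_mul_le_iff₀ hs]
  exact this

lemma four_le_logb_inv {p : ℝ} (hp : 1 / 2 < p) (hp1 : p < 1) (hγ0 : 0 < γ) (hγ1 : γ < 1)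
    (h : (2 * (1 - p)) ^ ((1 : ℝ) / 4) ≤ γ) : 4 ≤ Real.logb γ⁻¹ (p / (1 - p)) := by
  have hq : 0 < 1 - p := by linarith
  have hR : 1 < p / (1 - p) := (one_lt_div hq).2 (by linarith)
  have hR' : (p / (1 - p))⁻¹ ≤ 2 * (1 - p) := by
    rw [inv_div, div_le_iff₀ (by linarith)]; nlinarith
  have := inv_le_logb_inv hγ0 hγ1 hR (by norm_num)
    ((Real.rpow_le_rpow (by positivity) hR' (by norm_num)).trans h)
  rwa [one_div, inv_inv] at this

lemma le_rpow_logb_inv {x c : ℝ} (hγ0 : 0 < γ) (hγ1 : γ < 1) (hR : 1 < R) (hx : 1 < x) (hc : 1 < c)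
    (h : R⁻¹ ^ (Real.log c / Real.log x) ≤ γ) : x ≤ c ^ Real.logb γ⁻¹ R := by
  have hlc := Real.log_pos hc
  have hlx := Real.log_pos hx
  have := inv_le_logb_inv hγ0 hγ1 hR (by positivity) h
  rw [inv_div, ← Real.logb] at this
  calc x = c ^ Real.logb c x := (Real.rpow_logb (by linarith) hc.ne' (by linarith)).symm
    _ ≤ c ^ Real.logb γ⁻¹ R := Real.rpow_le_rpow_of_exponent_le hc.le this

lemma oracleCost_le {ᾱ a c N c_f c_g : ℝ} (hᾱ : 0 < ᾱ) (ha : 0 < a) (hc : 1 ≤ c)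
    (hκ : 4 ≤ Real.logb γ⁻¹ R) (hN : 0 < N) (hNc : N ≤ c ^ Real.logb γ⁻¹ R)
    (hcf : 0 ≤ c_f) (hcg : 0 ≤ c_g) :
    oracleCost c_f c_g a ≤ c ^ 4 * (1 + stepWeight γ R ᾱ a / N) * oracleCost c_f c_g ᾱ := by
  set t := ᾱ / a
  have ht : 0 ≤ t := by positivity
  have hsplit : oracleCost c_f c_g a = c_f / ᾱ ^ 4 * t ^ 4 + c_g / ᾱ ^ 2 * t ^ 2 := by
    simp only [oracleCost, t]; field_simp
  have h4 : t ^ 4 ≤ max 1 (t ^ 4) := le_max_right _ _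
  have h2 : t ^ 2 ≤ max 1 (t ^ 4) := by
    rcases le_total t 1 with h | h
    · exact (pow_le_one₀ ht h).trans (le_max_left _ _)
    · exact (pow_le_pow_right₀ h (by norm_num)).trans (le_max_right _ _)
  have hmax : max 1 (t ^ 4) ≤ c ^ 4 * (1 + stepWeight γ R ᾱ a / N) := by
    have hW : 0 ≤ stepWeight γ R ᾱ a / N := div_nonneg (zero_le_one.trans (le_max_left _ _)) hN.le
    refine max_le (by nlinarith [one_le_pow₀ (n := 4) hc]) ?_
    refine (pow_four_le_mul_max ht hc hκ hN hNc).trans (mul_le_mul_of_nonneg_left ?_ (by positivity))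
    refine max_le (by linarith) ?_
    have : t ^ Real.logb γ⁻¹ R / N ≤ stepWeight γ R ᾱ a / N :=
      div_le_div_of_nonneg_right (le_max_right _ _) hN.le
    linarith
  rw [hsplit, oracleCost]
  calc c_f / ᾱ ^ 4 * t ^ 4 + c_g / ᾱ ^ 2 * t ^ 2
      ≤ c_f / ᾱ ^ 4 * max 1 (t ^ 4) + c_g / ᾱ ^ 2 * max 1 (t ^ 4) := by gcongr
    _ ≤ c_f / ᾱ ^ 4 * (c ^ 4 * (1 + stepWeight γ R ᾱ a / N))
        + c_g / ᾱ ^ 2 * (c ^ 4 * (1 + stepWeight γ R ᾱ a / N)) := by gcongr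
    _ = _ := by ring

end Exponent

section Grid

variable {γ ᾱ : ℝ}

lemma exists_zpow_eq_of_step (hγ0 : 0 < γ) (hγ1 : γ < 1) (hᾱ : 0 < ᾱ) {j j' : ℤ} (hj : j ≤ 0)
    (hj' : j' ≤ 0) {a : ℕ → ℝ} (h0 : a 0 = ᾱ * γ ^ j)
    (hstep : ∀ k, a (k + 1) = γ * a k ∨ a (k + 1) = min (ᾱ * γ ^ j') (γ⁻¹ * a k)) :
    ∀ k : ℕ, ∃ e : ℤ, e ≤ k ∧ a k = ᾱ * γ ^ e
  | 0 => ⟨j, by simpa using hj, h0⟩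
  | k + 1 => by
    obtain ⟨e, hek, he⟩ := exists_zpow_eq_of_step hγ0 hγ1 hᾱ hj hj' h0 hstep k
    rcases hstep k with h | h
    · refine ⟨e + 1, by push_cast; omega, ?_⟩
      rw [h, he, zpow_add_one₀ hγ0.ne']; ring
    · refine ⟨max j' (e - 1), by push_cast; omega, ?_⟩
      rw [h, he, (zpow_right_anti₀ hγ0 hγ1.le).map_max, mul_min_of_nonneg _ _ hᾱ.le,
        zpow_sub_one₀ hγ0.ne']
      ring_nf

lemma mul_pow_le_mul_zpow (hγ0 : 0 < γ) (hγ1 : γ < 1) (hᾱ : 0 < ᾱ) {e : ℤ} {k : ℕ}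
    (he : e ≤ k) : ᾱ * γ ^ k ≤ ᾱ * γ ^ e := by
  rw [← zpow_natCast]
  exact mul_le_mul_of_nonneg_left (zpow_le_zpow_right_of_le_one₀ hγ0 hγ1.le he) hᾱ.le

lemma le_mul_of_lt_mul_zpow (hγ0 : 0 < γ) (hγ1 : γ < 1) (hᾱ : 0 < ᾱ) {e : ℤ}
    (h : ᾱ < ᾱ * γ ^ e) : ᾱ ≤ γ * (ᾱ * γ ^ e) := by
  have he : e < 0 := by
    by_contra! he
    nlinarith [zpow_le_one₀ hγ0 hγ1.le he]
  rw [mul_left_comm, ← zpow_one_add₀ hγ0.ne']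
  exact le_mul_of_one_le_right hᾱ.le (one_le_zpow_of_nonpos₀ hγ0 hγ1.le (by omega))

end Grid

section CondExp

variable {Ω : Type*} {m mΩ : MeasurableSpace Ω} {μ : Measure Ω} [IsFiniteMeasure μ]
  {G B : Set Ω} {X Y : Ω → ℝ} {p : ℝ}

lemma mul_setIntegral_le_setIntegral_inter (hm : m ≤ mΩ) (hG : MeasurableSet[m] G)
    (hB : MeasurableSet B) (hX : StronglyMeasurable[m] X) (hX0 : 0 ≤ X) (hXi : Integrable X μ)
    (hcond : ∀ᵐ x ∂μ, x ∈ G → p ≤ μ[B.indicator (fun _ => (1 : ℝ)) | m] x) :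
    p * ∫ x in G, X x ∂μ ≤ ∫ x in G ∩ B, X x ∂μ := by
  have h1B : Integrable (B.indicator fun _ => (1 : ℝ)) μ := (integrable_const 1).indicator hB
  have hXB : X * B.indicator (fun _ => (1 : ℝ)) = B.indicator X := by
    ext x; by_cases hx : x ∈ B <;> simp [hx]
  have hpull : μ[B.indicator X | m] =ᵐ[μ] X * μ[B.indicator (fun _ => (1 : ℝ)) | m] := by
    rw [← hXB]
    exact condExp_mul_of_stronglyMeasurable_left hX (hXB ▸ hXi.indicator hB) h1B
  have hint : Integrable (X * μ[B.indicator (fun _ => (1 : ℝ)) | m]) μ :=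
    integrable_condExp.congr hpull
  calc p * ∫ x in G, X x ∂μ = ∫ x in G, p * X x ∂μ := (integral_const_mul _ _).symm
    _ ≤ ∫ x in G, X x * μ[B.indicator (fun _ => (1 : ℝ)) | m] x ∂μ := by
        refine setIntegral_mono_on_ae (hXi.const_mul p).integrableOn hint.integrableOn (hm G hG) ?_
        filter_upwards [hcond] with x hx hxG
        rw [mul_comm]
        exact mul_le_mul_of_nonneg_left (hx hxG) (hX0 x)
    _ = ∫ x in G, μ[B.indicator X | m] x ∂μ := (setIntegral_congr_ae (hm G hG)
        (hpull.mono fun x hx _ => hx.symm))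
    _ = ∫ x in G ∩ B, X x ∂μ := by
        rw [setIntegral_condExp hm (hXi.indicator hB) hG, setIntegral_indicator hB]

variable [IsProbabilityMeasure μ]

lemma setIntegral_le_setIntegral_add_one (hm : m ≤ mΩ) (hp : 1 / 2 ≤ p) (hp1 : p < 1)
    (hG : MeasurableSet[m] G) (hB : MeasurableSet B) (hX : StronglyMeasurable[m] X) (hX0 : 0 ≤ X)
    (hXi : Integrable X μ) (hYi : Integrable Y μ)
    (hYB : ∀ᵐ x ∂μ, x ∈ G → x ∈ B → Y x ≤ X x * (p / (1 - p))⁻¹ + 1)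
    (hYBc : ∀ᵐ x ∂μ, x ∈ G → x ∉ B → Y x ≤ p / (1 - p) * X x)
    (hcond : ∀ᵐ x ∂μ, x ∈ G → p ≤ μ[B.indicator (fun _ => (1 : ℝ)) | m] x) :
    ∫ x in G, Y x ∂μ ≤ ∫ x in G, X x ∂μ + 1 := by
  have hG' : MeasurableSet G := hm G hG
  have hXsplit := integral_inter_add_sdiff hB (hXi.integrableOn (s := G) (μ := μ))
  set R := p / (1 - p)
  set I := ∫ x in G, X x ∂μ
  set J := ∫ x in G ∩ B, X x ∂μ
  have hJ : p * I ≤ J := mul_setIntegral_le_setIntegral_inter hm hG hB hX hX0 hXi hcond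
  have hYB' : ∫ x in G ∩ B, Y x ∂μ ≤ J * R⁻¹ + 1 := by
    calc ∫ x in G ∩ B, Y x ∂μ ≤ ∫ x in G ∩ B, (X x * R⁻¹ + 1) ∂μ := by
          refine setIntegral_mono_on_ae hYi.integrableOn
            ((hXi.mul_const _).add (integrable_const _)).integrableOn (hG'.inter hB) ?_
          filter_upwards [hYB] with x hx hxGB using hx hxGB.1 hxGB.2
      _ = J * R⁻¹ + μ.real (G ∩ B) := by
          rw [integral_add (hXi.mul_const _).integrableOn (integrable_const _).integrableOn,
            integral_mul_const, setIntegral_const, smul_eq_mul, mul_one]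
      _ ≤ J * R⁻¹ + 1 := by linarith [measureReal_le_one (μ := μ) (s := G ∩ B)]
  have hYBc' : ∫ x in G \ B, Y x ∂μ ≤ R * (I - J) := by
    calc ∫ x in G \ B, Y x ∂μ ≤ ∫ x in G \ B, R * X x ∂μ := by
          refine setIntegral_mono_on_ae hYi.integrableOn (hXi.const_mul _).integrableOn
            (hG'.diff hB) ?_
          filter_upwards [hYBc] with x hx hxGB using hx hxGB.1 hxGB.2
      _ = R * (I - J) := by
          rw [integral_const_mul]
          linear_combination R * hXsplit
  have hR : R * (1 - p) = p := div_mul_cancel₀ p (by linarith)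
  have hRinv : R⁻¹ * p = 1 - p := by simp only [R, inv_div]; field_simp
  have hRR : R⁻¹ ≤ R := by
    simp only [R, inv_div]
    rw [div_le_div_iff₀ (by linarith) (by linarith)]
    nlinarith
  calc ∫ x in G, Y x ∂μ = ∫ x in G ∩ B, Y x ∂μ + ∫ x in G \ B, Y x ∂μ :=
        (integral_inter_add_sdiff hB hYi.integrableOn).symm
    _ ≤ J * R⁻¹ + 1 + R * (I - J) := add_le_add hYB' hYBc'
    _ ≤ p * I * R⁻¹ + 1 + R * (I - p * I) := by
        nlinarith [mul_nonneg (sub_nonneg.2 hRR) (sub_nonneg.2 hJ)]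
    _ = I + 1 := by linear_combination I * hRinv + I * hR

end CondExp

section SumIndicator

variable {Ω : Type*} {mΩ : MeasurableSpace Ω} {μ : Measure Ω} {T : Ω → ℕ}

lemma integral_sum_Icc_min_eq {f : ℕ → Ω → ℝ} (hT : ∀ k, MeasurableSet {x | k ≤ T x})
    (hf : ∀ k, Integrable (f k) μ) (n : ℕ) :
    ∫ x, ∑ k ∈ Finset.Icc 1 (min (T x) n), f k x ∂μ =
      ∑ k ∈ Finset.Icc 1 n, ∫ x in {x | k ≤ T x}, f k x ∂μ := by
  have hsum : ∀ x, ∑ k ∈ Finset.Icc 1 (min (T x) n), f k x =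
      ∑ k ∈ Finset.Icc 1 n, {x | k ≤ T x}.indicator (f k) x := by
    intro x
    simp only [Set.indicator_apply, Set.mem_ofPred_eq]
    rw [← Finset.sum_filter]
    congr 1
    ext k
    simp only [Finset.mem_Icc, Finset.mem_filter]
    omega
  simp_rw [hsum]
  rw [integral_finsetSum _ fun k _ => (hf k).indicator (hT k)]
  exact Finset.sum_congr rfl fun k _ => integral_indicator (hT k)

end SumIndicator

structure IsStepSizeProcess_s14 {Ω : Type*} {mΩ : MeasurableSpace Ω} (μ : Measure Ω)
    (F : Filtration ℕ mΩ) (A : ℕ → Ω → ℝ) (T : Ω → ℕ) (γ ᾱ : ℝ) (j j' : ℤ) (p : ℝ) : Prop where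
  gamma_pos : 0 < γ
  gamma_lt_one : γ < 1
  alpha_pos : 0 < ᾱ
  half_lt_p : 1 / 2 < p
  p_lt_one : p < 1
  j_nonpos : j ≤ 0
  j'_nonpos : j' ≤ 0
  adapted : Adapted F A
  pos : ∀ k x, 0 < A k x
  isStoppingTime : IsStoppingTime F fun x => (T x : WithTop ℕ)
  init : ∀ x, A 0 x = ᾱ * γ ^ j
  step : ∀ k, ∀ᵐ x ∂μ, A (k + 1) x = γ * A k x ∨ A (k + 1) x = min (ᾱ * γ ^ j') (γ⁻¹ * A k x)
  prob_up : ∀ k, ∀ᵐ x ∂μ, (k < T x ∧ A k x ≤ ᾱ) →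
    p ≤ (μ[{x' | A (k + 1) x' = min (ᾱ * γ ^ j') (γ⁻¹ * A k x')}.indicator (fun _ => (1 : ℝ))
      | F k]) x

namespace IsStepSizeProcess_s14

variable {Ω : Type*} {mΩ : MeasurableSpace Ω} {μ : Measure Ω}
  {F : Filtration ℕ mΩ} {A : ℕ → Ω → ℝ} {T : Ω → ℕ} {γ R ᾱ p : ℝ} {j j' : ℤ}

lemma ae_exists_zpow (h : IsStepSizeProcess_s14 μ F A T γ ᾱ j j' p) :
    ∀ᵐ x ∂μ, ∀ k : ℕ, ∃ e : ℤ, e ≤ k ∧ A k x = ᾱ * γ ^ e := by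
  filter_upwards [ae_all_iff.2 h.step] with x hx
  exact exists_zpow_eq_of_step h.gamma_pos h.gamma_lt_one h.alpha_pos h.j_nonpos h.j'_nonpos
    (h.init x) hx

lemma ae_mul_pow_le (h : IsStepSizeProcess_s14 μ F A T γ ᾱ j j' p) :
    ∀ᵐ x ∂μ, ∀ k : ℕ, ᾱ * γ ^ k ≤ A k x := by
  filter_upwards [h.ae_exists_zpow] with x hx k
  obtain ⟨e, hek, he⟩ := hx k
  exact he ▸ mul_pow_le_mul_zpow h.gamma_pos h.gamma_lt_one h.alpha_pos hek

lemma alpha_le (h : IsStepSizeProcess_s14 μ F A T γ ᾱ j j' p) : ᾱ ≤ ᾱ * γ ^ j' :=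
  le_mul_of_one_le_right h.alpha_pos.le
    (one_le_zpow_of_nonpos₀ h.gamma_pos h.gamma_lt_one.le h.j'_nonpos)

lemma one_lt_odds (h : IsStepSizeProcess_s14 μ F A T γ ᾱ j j' p) : 1 < p / (1 - p) :=
  (one_lt_div (by linarith [h.p_lt_one])).2 (by linarith [h.half_lt_p])

lemma measurable (h : IsStepSizeProcess_s14 μ F A T γ ᾱ j j' p) (k : ℕ) : Measurable (A k) :=
  (h.adapted k).mono (F.le k) le_rfl

lemma measurableSet_le_stop (h : IsStepSizeProcess_s14 μ F A T γ ᾱ j j' p) (k : ℕ) :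
    MeasurableSet {x | k ≤ T x} :=
  F.le k _ (by simpa using h.isStoppingTime.measurableSet_ge k)

-- Above `ᾱ` both the current and the next step size lie in the region where the weight is `1`.
lemma ae_stepWeight_succ_eq (h : IsStepSizeProcess_s14 μ F A T γ ᾱ j j' p) (hR : 1 ≤ R) (k : ℕ) :
    ∀ᵐ x ∂μ, ᾱ < A k x → stepWeight γ R ᾱ (A (k + 1) x) = stepWeight γ R ᾱ (A k x) := by
  have hγ0 := h.gamma_pos
  have hγ1 := h.gamma_lt_one
  have hᾱ := h.alpha_pos
  filter_upwards [h.ae_exists_zpow, h.step k] with x hx hxs hlt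
  have hnext : ᾱ ≤ A (k + 1) x := by
    rcases hxs with hdown | hup
    · obtain ⟨e, -, he⟩ := hx k
      rw [hdown, he]
      exact le_mul_of_lt_mul_zpow hγ0 hγ1 hᾱ (he ▸ hlt)
    · rw [hup]
      refine le_min h.alpha_le (hlt.le.trans (le_mul_of_one_le_left (h.pos k x).le ((one_le_inv₀ hγ0).2 hγ1.le)))
  rw [stepWeight_eq_one hγ0 hγ1 hR hᾱ hnext, stepWeight_eq_one hγ0 hγ1 hR hᾱ hlt.le]

variable [IsProbabilityMeasure μ]

lemma integrable_stepWeight (h : IsStepSizeProcess_s14 μ F A T γ ᾱ j j' p) (hR : 1 ≤ R) (k : ℕ) :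
    Integrable (fun x => stepWeight γ R ᾱ (A k x)) μ :=
  Integrable.of_bound (measurable_stepWeight.comp (h.measurable k)).aestronglyMeasurable (R ^ k) <| by
    filter_upwards [h.ae_mul_pow_le] with x hx
    rw [Real.norm_of_nonneg (zero_le_one.trans one_le_stepWeight)]
    exact stepWeight_le_pow h.gamma_pos h.gamma_lt_one hR h.alpha_pos k (hx k)

lemma integrable_oracleCost (h : IsStepSizeProcess_s14 μ F A T γ ᾱ j j' p) {c_f c_g : ℝ}
    (hcf : 0 ≤ c_f) (hcg : 0 ≤ c_g) (k : ℕ) :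
    Integrable (fun x => oracleCost c_f c_g (A k x)) μ := by
  have hm : Measurable fun x => oracleCost c_f c_g (A k x) :=
    (measurable_const.div ((h.measurable k).pow_const 4)).add
      (measurable_const.div ((h.measurable k).pow_const 2))
  refine Integrable.of_bound hm.aestronglyMeasurable (oracleCost c_f c_g (ᾱ * γ ^ k)) ?_
  filter_upwards [h.ae_mul_pow_le] with x hx
  have := h.gamma_pos; have := h.alpha_pos
  rw [Real.norm_of_nonneg (by have := h.pos k x; unfold oracleCost; positivity)]
  exact oracleCost_le_of_le hcf hcg (by positivity) (hx k)

lemma setIntegral_stepWeight_succ_le_of_le (h : IsStepSizeProcess_s14 μ F A T γ ᾱ j j' p) (k : ℕ) :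
    ∫ x in {x | k < T x} ∩ {x | A k x ≤ ᾱ}, stepWeight γ (p / (1 - p)) ᾱ (A (k + 1) x) ∂μ ≤
      ∫ x in {x | k < T x} ∩ {x | A k x ≤ ᾱ}, stepWeight γ (p / (1 - p)) ᾱ (A k x) ∂μ + 1 := by
  have hγ0 := h.gamma_pos
  have hγ1 := h.gamma_lt_one
  have hᾱ := h.alpha_pos
  have hR := h.one_lt_odds.le
  have hU : MeasurableSet[F k] {x | k < T x} := by simpa using h.isStoppingTime.measurableSet_gt k
  have hL : MeasurableSet[F k] {x | A k x ≤ ᾱ} := h.adapted k measurableSet_Iic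
  have hB : MeasurableSet {x' | A (k + 1) x' = min (ᾱ * γ ^ j') (γ⁻¹ * A k x')} :=
    measurableSet_eq_fun (h.measurable (k + 1))
      (measurable_const.min ((h.measurable k).const_mul γ⁻¹))
  refine setIntegral_le_setIntegral_add_one (F.le k) h.half_lt_p.le h.p_lt_one (hU.inter hL) hB
    ((measurable_stepWeight.comp (h.adapted k)).stronglyMeasurable)
    (fun x => zero_le_one.trans one_le_stepWeight) (h.integrable_stepWeight hR k)
    (h.integrable_stepWeight hR (k + 1)) (ae_of_all _ fun x _ hxB => ?_) ?_ ?_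
  · rw [show A (k + 1) x = _ from hxB]
    exact stepWeight_min_le hγ0 hγ1 hR hᾱ (h.pos k x) h.alpha_le
  · filter_upwards [h.step k] with x hx _ hxB
    rw [hx.resolve_right hxB]
    exact stepWeight_mul_le hγ0 hγ1 hR hᾱ (h.pos k x)
  · filter_upwards [h.prob_up k] with x hx hxG using hx hxG

lemma setIntegral_stepWeight_succ_le (h : IsStepSizeProcess_s14 μ F A T γ ᾱ j j' p) (k : ℕ) :
    ∫ x in {x | k + 1 ≤ T x}, stepWeight γ (p / (1 - p)) ᾱ (A (k + 1) x) ∂μ ≤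
      ∫ x in {x | k ≤ T x}, stepWeight γ (p / (1 - p)) ᾱ (A k x) ∂μ + 1 := by
  have hR := h.one_lt_odds.le
  set W : ℕ → Ω → ℝ := fun i x => stepWeight γ (p / (1 - p)) ᾱ (A i x)
  have hWi : ∀ i, Integrable (W i) μ := h.integrable_stepWeight hR
  set U := {x | k < T x}
  set L := {x | A k x ≤ ᾱ}
  have hU : MeasurableSet U := F.le k _ (by simpa [U] using h.isStoppingTime.measurableSet_gt k)
  have hL : MeasurableSet L := h.measurable k measurableSet_Iic
  have hhigh : ∫ x in U \ L, W (k + 1) x ∂μ = ∫ x in U \ L, W k x ∂μ := by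
    refine setIntegral_congr_ae (hU.diff hL) ?_
    filter_upwards [h.ae_stepWeight_succ_eq hR k] with x hx hxUL using hx (not_le.1 hxUL.2)
  have hsplit := fun i => integral_inter_add_sdiff hL ((hWi i).integrableOn (s := U))
  calc ∫ x in U, W (k + 1) x ∂μ
      = ∫ x in U ∩ L, W (k + 1) x ∂μ + ∫ x in U \ L, W (k + 1) x ∂μ := (hsplit (k + 1)).symm
    _ ≤ ∫ x in U, W k x ∂μ + 1 := by
        rw [hhigh, ← hsplit k]
        linarith [h.setIntegral_stepWeight_succ_le_of_le k]
    _ ≤ ∫ x in {x | k ≤ T x}, W k x ∂μ + 1 := by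
        gcongr ?_ + 1
        exact setIntegral_mono_set (hWi k).integrableOn
          (ae_of_all _ fun x => zero_le_one.trans one_le_stepWeight)
          (ae_of_all _ fun x (hx : k < T x) => (hx.le : k ≤ T x))

lemma setIntegral_stepWeight_le (h : IsStepSizeProcess_s14 μ F A T γ ᾱ j j' p) (k : ℕ) :
    ∫ x in {x | k ≤ T x}, stepWeight γ (p / (1 - p)) ᾱ (A k x) ∂μ ≤ k + 1 := by
  induction k with
  | zero =>
    have hR := h.one_lt_odds.le
    simp only [zero_le, Set.ofPred_true, Measure.restrict_univ, CharP.cast_eq_zero, zero_add]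
    calc ∫ x, stepWeight γ (p / (1 - p)) ᾱ (A 0 x) ∂μ = ∫ _, (1 : ℝ) ∂μ := by
          refine integral_congr_ae (ae_of_all _ fun x => ?_)
          refine stepWeight_eq_one h.gamma_pos h.gamma_lt_one hR h.alpha_pos ?_
          rw [h.init x]
          exact le_mul_of_one_le_right h.alpha_pos.le
            (one_le_zpow_of_nonpos₀ h.gamma_pos h.gamma_lt_one.le h.j_nonpos)
      _ ≤ 1 := by simp
  | succ k ih =>
    refine (h.setIntegral_stepWeight_succ_le k).trans ?_
    push_cast
    linarith

lemma setIntegral_oracleCost_le (h : IsStepSizeProcess_s14 μ F A T γ ᾱ j j' p) {c c_f c_g : ℝ}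
    {n k : ℕ} (hc : 1 ≤ c) (hκ : 4 ≤ Real.logb γ⁻¹ (p / (1 - p)))
    (hnc : (n : ℝ) ≤ c ^ Real.logb γ⁻¹ (p / (1 - p))) (hcf : 0 ≤ c_f) (hcg : 0 ≤ c_g)
    (hk : 1 ≤ k) (hkn : k ≤ n) :
    ∫ x in {x | k ≤ T x}, oracleCost c_f c_g (A k x) ∂μ ≤ 3 * c ^ 4 * oracleCost c_f c_g ᾱ := by
  have hn : (0 : ℝ) < n := by exact_mod_cast (hk.trans hkn)
  have hR := h.one_lt_odds.le
  have hD : 0 ≤ oracleCost c_f c_g ᾱ := by have := h.alpha_pos; unfold oracleCost; positivity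
  set a := c ^ 4 * oracleCost c_f c_g ᾱ
  set W := fun x => stepWeight γ (p / (1 - p)) ᾱ (A k x)
  have hWi : Integrable W μ := h.integrable_stepWeight hR k
  calc ∫ x in {x | k ≤ T x}, oracleCost c_f c_g (A k x) ∂μ
      ≤ ∫ x in {x | k ≤ T x}, (a + a / n * W x) ∂μ := by
        refine setIntegral_mono (h.integrable_oracleCost hcf hcg k).integrableOn
          ((integrable_const a).add (hWi.const_mul _)).integrableOn fun x => ?_
        refine (oracleCost_le h.alpha_pos (h.pos k x) hc hκ hn hnc hcf hcg).trans_eq ?_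
        simp only [a, W]
        field_simp
    _ = a * μ.real {x | k ≤ T x} + a / n * ∫ x in {x | k ≤ T x}, W x ∂μ := by
        rw [integral_add (integrable_const a).integrableOn (hWi.const_mul _).integrableOn,
          setIntegral_const, smul_eq_mul, MeasureTheory.integral_const_mul]
        ring
    _ ≤ a * 1 + a / n * (k + 1) := by
        gcongr
        · exact measureReal_le_one
        · exact h.setIntegral_stepWeight_le k
    _ ≤ 3 * a := by
        have hk' : ((k : ℝ) + 1) / n ≤ 2 := by
          rw [div_le_iff₀ hn]
          have : (k : ℝ) ≤ n := by exact_mod_cast hkn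
          have : (1 : ℝ) ≤ k := by exact_mod_cast hk
          linarith
        have ha : 0 ≤ a := by positivity
        calc a * 1 + a / n * (k + 1) = a * (1 + (k + 1) / n) := by ring
          _ ≤ a * (1 + 2) := by gcongr
          _ = 3 * a := by ring
    _ = 3 * c ^ 4 * oracleCost c_f c_g ᾱ := by ring

end IsStepSizeProcess_s14

/-- Simplified expected total sample complexity of first-order STORM:
with per-iteration oracle cost `oc(α) = c_f·α⁻⁴ + c_g·α⁻²` and `c' > 1`, there is a
constant `C > 0` depending only on `p` and `c'` such that for every admissible process
and every `n ≥ 2`, if `γ ≥ max{(2q)^{1/4}, (q/p)^{log c'/log n}}`, then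
`E[TOC(min{T, n})] ≤ C·n·(log n)·(c_f/ᾱ⁴ + c_g/ᾱ²)`. -/
theorem stmt_14
    (p c' : ℝ) (hp : 1/2 < p) (hp1 : p < 1) (hc' : 1 < c') :
    ∃ C > 0,
      ∀ (γ : ℝ), 0 < γ → γ < 1 →
      ∀ (Ω : Type) (mΩ : MeasurableSpace Ω) (μ : Measure Ω),
        IsProbabilityMeasure μ →
      ∀ (F : Filtration ℕ mΩ) (A : ℕ → Ω → ℝ) (T : Ω → ℕ)
        (ᾱ c_f c_g : ℝ) (j j' : ℤ) (αmax : ℝ),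
        0 < ᾱ → 0 ≤ c_f → 0 ≤ c_g → j ≤ 0 → j' ≤ 0 → αmax = ᾱ * γ ^ j' →
        Adapted F A → (∀ k x, 0 < A k x) → IsStoppingTime F (fun x => (T x : WithTop ℕ)) →
        (∀ x, A 0 x = ᾱ * γ ^ j) →
        (∀ k, ∀ᵐ x ∂μ,
          A (k+1) x = γ * A k x ∨ A (k+1) x = min αmax (γ⁻¹ * A k x)) →
        (∀ k, ∀ᵐ x ∂μ, (k < T x ∧ A k x ≤ ᾱ) →
          p ≤ (μ[Set.indicator {x' | A (k+1) x' = min αmax (γ⁻¹ * A k x')}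
                  (fun _ => (1:ℝ)) | F k]) x) →
        ∀ n : ℕ, 2 ≤ n →
          max ((2 * (1 - p)) ^ ((1:ℝ)/4)) (((1-p)/p) ^ (Real.log c' / Real.log n)) ≤ γ →
          ∫ x, (∑ k ∈ Finset.Icc 1 (min (T x) n),
              (c_f / (A k x)^4 + c_g / (A k x)^2)) ∂μ ≤
            C * n * Real.log n * (c_f / ᾱ^4 + c_g / ᾱ^2) := by
  refine ⟨3 * c' ^ 4 / Real.log 2, by positivity, ?_⟩
  intro γ hγ0 hγ1 Ω mΩ μ _ F A T ᾱ c_f c_g j j' αmax hᾱ hcf hcg hj hj' hαmax hA hApos hT hA0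
    hstep hprob n hn hγ
  subst hαmax
  have h : IsStepSizeProcess_s14 μ F A T γ ᾱ j j' p :=
    ⟨hγ0, hγ1, hᾱ, hp, hp1, hj, hj', hA, hApos, hT, hA0, hstep, hprob⟩
  have hR := h.one_lt_odds
  have hκ : 4 ≤ Real.logb γ⁻¹ (p / (1 - p)) :=
    four_le_logb_inv hp hp1 hγ0 hγ1 ((le_max_left _ _).trans hγ)
  have hnc : (n : ℝ) ≤ c' ^ Real.logb γ⁻¹ (p / (1 - p)) :=
    le_rpow_logb_inv hγ0 hγ1 hR (by exact_mod_cast hn) hc'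
      (by rw [inv_div]; exact (le_max_right _ _).trans hγ)
  have hD : 0 ≤ oracleCost c_f c_g ᾱ := by unfold oracleCost; positivity
  have hlog : Real.log 2 ≤ Real.log n := Real.log_le_log two_pos (by exact_mod_cast hn)
  calc ∫ x, ∑ k ∈ Finset.Icc 1 (min (T x) n), (c_f / (A k x) ^ 4 + c_g / (A k x) ^ 2) ∂μ
      = ∑ k ∈ Finset.Icc 1 n, ∫ x in {x | k ≤ T x}, oracleCost c_f c_g (A k x) ∂μ :=
        integral_sum_Icc_min_eq h.measurableSet_le_stop (h.integrable_oracleCost hcf hcg) n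
    _ ≤ ∑ _k ∈ Finset.Icc 1 n, 3 * c' ^ 4 * oracleCost c_f c_g ᾱ :=
        Finset.sum_le_sum fun k hk => h.setIntegral_oracleCost_le hc'.le hκ hnc hcf hcg
          (Finset.mem_Icc.1 hk).1 (Finset.mem_Icc.1 hk).2
    _ = 3 * c' ^ 4 / Real.log 2 * n * Real.log 2 * oracleCost c_f c_g ᾱ := by
        rw [Finset.sum_const, Nat.card_Icc, nsmul_eq_mul, Nat.add_sub_cancel]
        field_simp
    _ ≤ 3 * c' ^ 4 / Real.log 2 * n * Real.log n * oracleCost c_f c_g ᾱ := by gcongr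
end

section
/- Suppose the per-iteration oracle cost is oc(α) = c₀ + c₁/(min{τ, κ·α})² for constants c₀, c₁ ≥ 0, κ > 0, and τ ≥ κ·ᾱ, and that μ(T > n) ≤ η for some real η ∈ [0,1] and integer n ≥ 2. Let ω > 0 and 0 < β ≤ 1/2, and suppose γ ≥ max{ 1/2, (1/(2q))^{log(2β)/((1+ω)·log n)} }. Then with probability at least 1 − η − n^{−ω} − c·n^{−(1+ω)}, we have T ≤ n and TOC(T) ≤ n · ( c₀ + c₁/(κ·β·ᾱ)² ). -/
/-!
Write the step size as `ᾱ * γ ^ I t`, so that `I` is an integer walk that moves up by one on a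
failed step and down by one (capped at `j'`) on a successful one. At levels `I ≥ 0` a step is
successful with conditional probability at least `p > 1/2`. If the step size drops below `β * ᾱ`
at some time `k ≤ min n T`, then `I` climbs from level `0` to level `L`, the least integer with
`γ ^ L < β`, without returning to `0`, starting at some time `s < n`. Gambler's ruin bounds each
such crossing: the potential `∑ᵢ (p / q) ^ i · P(I at level i) + (p / q) ^ L · P(crossed)` of the
walk killed at `0` and at `T` cannot increase, so a crossing has probability at most
`(q / p) ^ L ≤ (2q) ^ L`, and the lower bound on `γ` is what makes `(2q) ^ L ≤ n ^ -(1 + ω)`.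
Summing over `s` gives `n ^ -ω`. Off this event and `{T > n}` every one of the at most `n` oracle
calls costs at most `c₀ + c₁ / (κ β ᾱ)²`.
-/

open MeasureTheory ProbabilityTheory

namespace StepSearch

section Grid

variable {γ ᾱ : ℝ}

lemma grid_injective (hγ0 : 0 < γ) (hγ1 : γ < 1) (hᾱ : 0 < ᾱ) {a b : ℤ}
    (h : ᾱ * γ ^ a = ᾱ * γ ^ b) : a = b :=
  (zpow_right_strictAnti₀ hγ0 hγ1).injective (mul_left_cancel₀ hᾱ.ne' h)

lemma mul_grid (hγ0 : 0 < γ) (m : ℤ) : γ * (ᾱ * γ ^ m) = ᾱ * γ ^ (m + 1) := by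
  rw [zpow_add_one₀ hγ0.ne']; ring

lemma min_inv_mul_grid (hγ0 : 0 < γ) (hγ1 : γ < 1) (hᾱ : 0 < ᾱ) (j' m : ℤ) :
    min (ᾱ * γ ^ j') (γ⁻¹ * (ᾱ * γ ^ m)) = ᾱ * γ ^ max j' (m - 1) := by
  have hanti := (zpow_right_strictAnti₀ hγ0 hγ1).antitone
  rw [show γ⁻¹ * (ᾱ * γ ^ m) = ᾱ * γ ^ (m - 1) by rw [zpow_sub_one₀ hγ0.ne']; ring]
  rcases le_total j' (m - 1) with h | h
  · rw [max_eq_right h, min_eq_right (mul_le_mul_of_nonneg_left (hanti h) hᾱ.le)]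
  · rw [max_eq_left h, min_eq_left (mul_le_mul_of_nonneg_left (hanti h) hᾱ.le)]

end Grid

section Excursion

variable {Ω : Type*} (A : ℕ → Ω → ℝ) (T : Ω → ℕ) (γ ᾱ αmax : ℝ) (L s : ℕ)

def shrinks (t : ℕ) : Set Ω := {x | A (t + 1) x = γ * A t x}

def grows (t : ℕ) : Set Ω := {x | A (t + 1) x = min αmax (γ⁻¹ * A t x)}

/-- Level `i` stands for the step size `ᾱ * γ ^ i`. A point lies in `excursion d i` when the
step size equals `ᾱ` at time `s`, stays at levels in `[1, L)` at times `s + 1, …, s + d` with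
every one of these steps taken before `T`, and is at level `i` at time `s + d`. -/
def excursion : ℕ → ℤ → Set Ω
  | 0, i => if i = 0 then {x | A s x = ᾱ} else ∅
  | d + 1, i =>
    if 1 ≤ i ∧ i < L then
      ((excursion d (i - 1) ∩ shrinks A γ (s + d)) ∪ (excursion d (i + 1) ∩ grows A γ αmax (s + d)))
        ∩ {x | s + d < T x}
    else ∅

/-- The excursion from time `s` has reached level `L` within `d` steps. -/
def crossing : ℕ → Set Ω
  | 0 => ∅
  | d + 1 => crossing d ∪ (excursion A T γ ᾱ αmax L s d (L - 1) ∩ shrinks A γ (s + d)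
      ∩ {x | s + d < T x})

variable {A T γ ᾱ αmax L s}

lemma excursion_eq_empty (hL : 0 < L) {i : ℤ} (hi : i < 0 ∨ L ≤ i) :
    ∀ d, excursion A T γ ᾱ αmax L s d i = ∅
  | 0 => if_neg (by omega)
  | _ + 1 => if_neg (by omega)

lemma excursion_succ_zero (d : ℕ) : excursion A T γ ᾱ αmax L s (d + 1) 0 = ∅ := if_neg (by omega)

lemma excursion_succ {d : ℕ} {i : ℤ} (h1 : 1 ≤ i) (hL : i < L) :
    excursion A T γ ᾱ αmax L s (d + 1) i =
      excursion A T γ ᾱ αmax L s d (i - 1) ∩ shrinks A γ (s + d) ∩ {x | s + d < T x} ∪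
        excursion A T γ ᾱ αmax L s d (i + 1) ∩ grows A γ αmax (s + d) ∩ {x | s + d < T x} := by
  rw [excursion, if_pos ⟨h1, hL⟩, Set.union_inter_distrib_right]

lemma crossing_mono {d d' : ℕ} (h : d ≤ d') :
    crossing A T γ ᾱ αmax L s d ⊆ crossing A T γ ᾱ αmax L s d' := by
  induction h with
  | refl => rfl
  | step _ ih => exact ih.trans Set.subset_union_left

lemma excursion_subset_grid (hγ0 : 0 < γ) (hγ1 : γ < 1) (hᾱ : 0 < ᾱ) {j' : ℤ} (hj' : j' ≤ 0) :
    ∀ d i, excursion A T γ ᾱ (ᾱ * γ ^ j') L s d i ⊆ {x | A (s + d) x = ᾱ * γ ^ i}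
  | 0, i, x, hx => by
    by_cases hi : i = 0
    · subst hi; simpa [excursion] using hx
    · simp [excursion, if_neg hi] at hx
  | d + 1, i, x, hx => by
    simp only [excursion] at hx
    split_ifs at hx with hi
    · rcases hx.1 with ⟨hx, hstep⟩ | ⟨hx, hstep⟩
      · have := excursion_subset_grid hγ0 hγ1 hᾱ hj' d (i - 1) hx
        simp only [shrinks, Set.mem_ofPred_eq] at hstep this ⊢
        rw [← add_assoc, hstep, this, mul_grid hγ0, sub_add_cancel]
      · have := excursion_subset_grid hγ0 hγ1 hᾱ hj' d (i + 1) hx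
        simp only [grows, Set.mem_ofPred_eq] at hstep this ⊢
        rw [← add_assoc, hstep, this, min_inv_mul_grid hγ0 hγ1 hᾱ, add_sub_cancel_right,
          max_eq_right (by omega)]
    · exact hx.elim

end Excursion

section Measurability

variable {Ω : Type*} {mΩ : MeasurableSpace Ω} {F : Filtration ℕ mΩ} {A : ℕ → Ω → ℝ} {T : Ω → ℕ}
  {γ ᾱ αmax : ℝ} {L s : ℕ}

lemma measurableSet_shrinks (hA : Adapted F A) (t : ℕ) :
    MeasurableSet[F (t + 1)] (shrinks A γ t) :=
  measurableSet_eq_fun (hA (t + 1))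
    (measurable_const.mul ((hA t).mono (F.mono t.le_succ) le_rfl))

lemma measurableSet_grows (hA : Adapted F A) (t : ℕ) :
    MeasurableSet[F (t + 1)] (grows A γ αmax t) :=
  measurableSet_eq_fun (hA (t + 1))
    (measurable_const.min (measurable_const.mul ((hA t).mono (F.mono t.le_succ) le_rfl)))

lemma measurableSet_lt_stoppingTime (hT : IsStoppingTime F fun x => (T x : WithTop ℕ)) (t : ℕ) :
    MeasurableSet[F t] {x | t < T x} := by
  simpa using hT.measurableSet_gt t

lemma measurableSet_excursion (hA : Adapted F A)
    (hT : IsStoppingTime F fun x => (T x : WithTop ℕ)) :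
    ∀ d i, MeasurableSet[F (s + d)] (excursion A T γ ᾱ αmax L s d i)
  | 0, i => by
    simp only [excursion]
    split_ifs
    · exact measurableSet_eq_fun (hA s) measurable_const
    · exact (F _).measurableSet_empty
  | d + 1, i => by
    have hmono := F.mono (Nat.le_succ (s + d))
    simp only [excursion]
    split_ifs
    · refine MeasurableSet.inter (MeasurableSet.union ?_ ?_)
        (hmono _ (measurableSet_lt_stoppingTime hT _))
      · exact (hmono _ (measurableSet_excursion hA hT d _)).inter (measurableSet_shrinks hA _)
      · exact (hmono _ (measurableSet_excursion hA hT d _)).inter (measurableSet_grows hA _)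
    · exact (F _).measurableSet_empty

end Measurability

section Potential

lemma div_sq_mul_add_le_of_drift {p q D U M m : ℝ} (hpq : p + q = 1) (hqp : q ≤ p) (hq : 0 < q)
    (hDU : D + U ≤ M) (hU : p * M ≤ U) (hM : M ≤ m) : (p / q) ^ 2 * D + U ≤ p / q * m := by
  have hp : 0 < p := hq.trans_le hqp
  have hsq : p ^ 2 - q ^ 2 = p - q := by rw [sq_sub_sq, hpq, one_mul]
  have key : p ^ 2 * D + q ^ 2 * U ≤ p * q * m :=
    calc p ^ 2 * D + q ^ 2 * U ≤ p ^ 2 * (M - U) + q ^ 2 * U := by gcongr; linarith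
      _ = p ^ 2 * M - (p - q) * U := by rw [← hsq]; ring
      _ ≤ p ^ 2 * M - (p - q) * (p * M) := by gcongr
      _ = p * q * M := by ring
      _ ≤ p * q * m := by gcongr
  rw [div_pow, div_mul_eq_mul_div, div_mul_eq_mul_div, div_add' _ _ _ (by positivity),
    div_le_div_iff₀ (by positivity) hq]
  nlinarith

open Finset in
/-- One step of the potential with weights `r ^ i`: the new mass `a (i + 1)` at a level comes
from level `i` by a shrinking step (`D i`) or from level `i + 2` by a growing step (`U (i + 2)`),
and the new absorbed mass `k'` gains what leaves level `L` by a shrinking step. -/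
lemma weighted_sum_step_le {r : ℝ} (hr : 0 < r) (L : ℕ) {a m D U : ℕ → ℝ} {k k' : ℝ}
    (ha0 : a 0 = 0) (ha : ∀ i < L, a (i + 1) ≤ D i + U (i + 2)) (hU : ∀ i, 0 ≤ U i)
    (hUL : U (L + 1) = 0) (hk : k' ≤ k + D L) (hloc : ∀ i, r ^ 2 * D i + U i ≤ r * m i) :
    ∑ i ∈ range (L + 1), r ^ i * a i + r ^ (L + 1) * k' ≤
      ∑ i ∈ range (L + 1), r ^ i * m i + r ^ (L + 1) * k := by
  have hUshift : ∑ i ∈ range L, r ^ (i + 2) * U (i + 2) ≤ ∑ i ∈ range (L + 1), r ^ i * U i := by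
    have h01 : 0 ≤ r ^ 0 * U 0 + r ^ 1 * U 1 := by have := hU 0; have := hU 1; positivity
    calc ∑ i ∈ range L, r ^ (i + 2) * U (i + 2)
        ≤ ∑ i ∈ range L, r ^ (i + 2) * U (i + 2) + r ^ 1 * U 1 + r ^ 0 * U 0 := by linarith
      _ = ∑ i ∈ range (L + 1), r ^ i * U i + r ^ (L + 1) * U (L + 1) := by
          rw [← sum_range_succ, ← sum_range_succ' (fun i => r ^ (i + 1) * U (i + 1)),
            ← sum_range_succ' (fun i => r ^ i * U i)]
      _ = ∑ i ∈ range (L + 1), r ^ i * U i := by rw [hUL, mul_zero, add_zero]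
  suffices r * (∑ i ∈ range (L + 1), r ^ i * a i + r ^ (L + 1) * k') ≤
      r * (∑ i ∈ range (L + 1), r ^ i * m i + r ^ (L + 1) * k) from le_of_mul_le_mul_left this hr
  calc r * (∑ i ∈ range (L + 1), r ^ i * a i + r ^ (L + 1) * k')
      = ∑ i ∈ range L, r ^ (i + 2) * a (i + 1) + r ^ (L + 2) * k' := by
        rw [sum_range_succ', ha0, mul_zero, add_zero, mul_add, mul_sum]
        congr 1
        · exact sum_congr rfl fun i _ => by ring
        · ring
    _ ≤ ∑ i ∈ range L, r ^ (i + 2) * (D i + U (i + 2)) + r ^ (L + 2) * (k + D L) := by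
        gcongr with i hi
        exact ha i (mem_range.1 hi)
    _ = ∑ i ∈ range (L + 1), r ^ (i + 2) * D i + ∑ i ∈ range L, r ^ (i + 2) * U (i + 2)
          + r ^ (L + 2) * k := by
        simp only [sum_range_succ, mul_add, sum_add_distrib]; ring
    _ ≤ ∑ i ∈ range (L + 1), r ^ (i + 2) * D i + ∑ i ∈ range (L + 1), r ^ i * U i
          + r ^ (L + 2) * k := by gcongr
    _ = ∑ i ∈ range (L + 1), r ^ i * (r ^ 2 * D i + U i) + r ^ (L + 2) * k := by
        rw [← sum_add_distrib]; congr 1; exact sum_congr rfl fun i _ => by ring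
    _ ≤ ∑ i ∈ range (L + 1), r ^ i * (r * m i) + r ^ (L + 2) * k := by
        gcongr with i; exact hloc i
    _ = r * (∑ i ∈ range (L + 1), r ^ i * m i + r ^ (L + 1) * k) := by
        rw [mul_add, mul_sum]; congr 1
        · exact sum_congr rfl fun i _ => by ring
        · ring

lemma mul_measureReal_le_of_le_condExp_indicator {Ω : Type*} {m mΩ : MeasurableSpace Ω}
    {μ : Measure Ω} [IsFiniteMeasure μ] (hm : m ≤ mΩ) [SigmaFinite (μ.trim hm)] {G S : Set Ω}
    {p : ℝ} (hG : MeasurableSet G) (hS : MeasurableSet[m] S)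
    (h : ∀ᵐ x ∂μ, x ∈ S → p ≤ μ[G.indicator (fun _ => (1 : ℝ)) | m] x) :
    p * μ.real S ≤ μ.real (S ∩ G) := by
  have hint : Integrable (G.indicator fun _ => (1 : ℝ)) μ := (integrable_const 1).indicator hG
  calc p * μ.real S = ∫ _ in S, p ∂μ := by rw [setIntegral_const, smul_eq_mul, mul_comm]
    _ ≤ ∫ x in S, μ[G.indicator (fun _ => (1 : ℝ)) | m] x ∂μ :=
        integral_mono_ae (integrable_const p) integrable_condExp.integrableOn
          ((ae_restrict_iff' (hm S hS)).2 h)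
    _ = ∫ x in S, G.indicator (fun _ => (1 : ℝ)) x ∂μ := setIntegral_condExp hm hint hS
    _ = μ.real (S ∩ G) := by rw [setIntegral_indicator hG, setIntegral_const, smul_eq_mul, mul_one]

variable {Ω : Type*} {mΩ : MeasurableSpace Ω} {μ : Measure Ω} [IsProbabilityMeasure μ]
  {F : Filtration ℕ mΩ} {A : ℕ → Ω → ℝ} {T : Ω → ℕ} {γ ᾱ αmax p q : ℝ} {j' : ℤ} {L s : ℕ}

lemma not_mem_grows_of_mem_shrinks (hγ0 : 0 < γ) (hγ1 : γ < 1) {t : ℕ} {x : Ω}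
    (hpos : 0 < A t x) (hle : A t x ≤ αmax) (hx : x ∈ shrinks A γ t) : x ∉ grows A γ αmax t := by
  intro hgrow
  have hlt : γ * A t x < min αmax (γ⁻¹ * A t x) :=
    lt_min (by nlinarith) (by nlinarith [(one_lt_inv₀ hγ0).2 hγ1])
  exact hlt.ne (hx.symm.trans hgrow)

lemma excursion_drift (hA : Adapted F A) (hT : IsStoppingTime F fun x => (T x : WithTop ℕ))
    (hγ0 : 0 < γ) (hγ1 : γ < 1) (hᾱ : 0 < ᾱ) (hj' : j' ≤ 0)
    (hpq : p + q = 1) (hqp : q ≤ p) (hq : 0 < q) (d i : ℕ)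
    (hcond : ∀ᵐ x ∂μ, (s + d < T x ∧ A (s + d) x ≤ ᾱ) →
      p ≤ μ[(grows A γ (ᾱ * γ ^ j') (s + d)).indicator (fun _ => (1 : ℝ)) | F (s + d)] x) :
    let X := excursion A T γ ᾱ (ᾱ * γ ^ j') L s d i
    (p / q) ^ 2 * μ.real (X ∩ shrinks A γ (s + d) ∩ {x | s + d < T x})
        + μ.real (X ∩ grows A γ (ᾱ * γ ^ j') (s + d) ∩ {x | s + d < T x}) ≤ p / q * μ.real X := by
  intro X
  have hX : MeasurableSet[F (s + d)] (X ∩ {x | s + d < T x}) :=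
    (measurableSet_excursion hA hT d i).inter (measurableSet_lt_stoppingTime hT _)
  have hbounds : ∀ x ∈ X, 0 < A (s + d) x ∧ A (s + d) x ≤ ᾱ := fun x hx => by
    rw [excursion_subset_grid hγ0 hγ1 hᾱ hj' d i hx, zpow_natCast]
    exact ⟨by positivity, mul_le_of_le_one_right hᾱ.le (pow_le_one₀ hγ0.le hγ1.le)⟩
  have hdisj : Disjoint (X ∩ shrinks A γ (s + d) ∩ {x | s + d < T x})
      (X ∩ grows A γ (ᾱ * γ ^ j') (s + d) ∩ {x | s + d < T x}) := by
    rw [Set.disjoint_left]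
    rintro x ⟨⟨hxX, hshr⟩, -⟩ ⟨⟨-, hgr⟩, -⟩
    obtain ⟨hpos, hle⟩ := hbounds x hxX
    exact not_mem_grows_of_mem_shrinks hγ0 hγ1 hpos
      (hle.trans (le_mul_of_one_le_right hᾱ.le (one_le_zpow_of_nonpos₀ hγ0 hγ1.le hj'))) hshr hgr
  have hgrows : MeasurableSet (X ∩ grows A γ (ᾱ * γ ^ j') (s + d) ∩ {x | s + d < T x}) :=
    ((F.le _ _ (measurableSet_excursion hA hT d i)).inter
      (F.le _ _ (measurableSet_grows hA _))).inter
      (F.le _ _ (measurableSet_lt_stoppingTime hT _))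
  refine div_sq_mul_add_le_of_drift (M := μ.real (X ∩ {x | s + d < T x})) hpq hqp hq ?_ ?_
    (measureReal_mono Set.inter_subset_left)
  · rw [← measureReal_union hdisj hgrows]
    exact measureReal_mono
      (Set.union_subset (fun x hx => ⟨hx.1.1, hx.2⟩) fun x hx => ⟨hx.1.1, hx.2⟩)
  · rw [Set.inter_right_comm]
    refine mul_measureReal_le_of_le_condExp_indicator (F.le _)
      (F.le _ _ (measurableSet_grows hA _)) hX ?_
    filter_upwards [hcond] with x hx hxS
    exact hx ⟨hxS.2, (hbounds x hxS.1).2⟩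

lemma potential_le_one (hA : Adapted F A) (hT : IsStoppingTime F fun x => (T x : WithTop ℕ))
    (hγ0 : 0 < γ) (hγ1 : γ < 1) (hᾱ : 0 < ᾱ) (hj' : j' ≤ 0)
    (hpq : p + q = 1) (hqp : q ≤ p) (hq : 0 < q)
    (hcond : ∀ k, ∀ᵐ x ∂μ, (k < T x ∧ A k x ≤ ᾱ) →
      p ≤ μ[(grows A γ (ᾱ * γ ^ j') k).indicator (fun _ => (1 : ℝ)) | F k] x) (hL : 0 < L) :
    ∀ d, ∑ i ∈ Finset.range L, (p / q) ^ i * μ.real (excursion A T γ ᾱ (ᾱ * γ ^ j') L s d i)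
      + (p / q) ^ L * μ.real (crossing A T γ ᾱ (ᾱ * γ ^ j') L s d) ≤ 1 := by
  obtain ⟨L, rfl⟩ := Nat.exists_eq_add_of_lt hL
  rw [zero_add] at hL ⊢
  intro d
  induction d with
  | zero =>
    rw [Finset.sum_eq_single_of_mem 0 (Finset.mem_range.2 hL) fun i _ hi => by
      rw [excursion, if_neg (by exact_mod_cast hi), measureReal_empty, mul_zero]]
    simp [crossing, measureReal_le_one]
  | succ d ih =>
    refine (weighted_sum_step_le (div_pos (hq.trans_le hqp) hq) L
      (D := fun i => μ.real (excursion A T γ ᾱ (ᾱ * γ ^ j') (L + 1) s d i ∩ shrinks A γ (s + d)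
        ∩ {x | s + d < T x}))
      (U := fun i => μ.real (excursion A T γ ᾱ (ᾱ * γ ^ j') (L + 1) s d i
        ∩ grows A γ (ᾱ * γ ^ j') (s + d) ∩ {x | s + d < T x}))
      ?_ (fun i hi => ?_) (fun _ => measureReal_nonneg) ?_ ?_
      (fun i => excursion_drift hA hT hγ0 hγ1 hᾱ hj' hpq hqp hq d i (hcond (s + d)))).trans ih
    · simp [excursion_succ_zero]
    · rw [excursion_succ (by omega) (by omega)]
      push_cast
      simpa [add_assoc] using measureReal_union_le _ _
    · rw [excursion_eq_empty hL (Or.inr (by push_cast; rfl))]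
      simp
    · simpa [crossing] using measureReal_union_le _ _

end Potential

section Path

variable {Ω : Type*} {A : ℕ → Ω → ℝ} {T : Ω → ℕ} {γ ᾱ : ℝ} {j' : ℤ} {L : ℕ} {x : Ω}
  {I : ℕ → ℤ}

/-- The last visit of `I` to level `0` before its first passage to level `L`. -/
lemma exists_upcrossing {I : ℕ → ℤ} {j' L : ℤ} (hj' : j' ≤ 0) (hL : 0 < L)
    (hstep : ∀ t, I (t + 1) = I t + 1 ∨ I (t + 1) = max j' (I t - 1)) (h0 : I 0 ≤ 0) {k : ℕ}
    (hk : L ≤ I k) :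
    ∃ s e, s ≤ e ∧ e < k ∧ I s = 0 ∧ I e = L - 1 ∧ I (e + 1) = I e + 1 ∧
      ∀ t, s < t → t ≤ e → 1 ≤ I t ∧ I t < L := by
  classical
  have hex : ∃ t, L ≤ I t := ⟨k, hk⟩
  obtain ⟨e, he⟩ : ∃ e, Nat.find hex = e + 1 :=
    Nat.exists_eq_add_one_of_ne_zero fun h => by have := Nat.find_spec hex; rw [h] at this; omega
  have hbelow : ∀ t ≤ e, I t < L := fun t ht => not_le.1 (Nat.find_min hex (by omega))
  have hup : I (e + 1) = I e + 1 := by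
    have := hbelow e le_rfl
    have := he ▸ Nat.find_spec hex
    rcases hstep e with h | h <;> omega
  set s := Nat.findGreatest (fun t => I t ≤ 0) e
  have hs : I s ≤ 0 := Nat.findGreatest_spec (P := fun t => I t ≤ 0) (Nat.zero_le e) h0
  have habove : ∀ t, s < t → t ≤ e → 1 ≤ I t := fun t h1 h2 =>
    by have := Nat.findGreatest_is_greatest h1 h2; simp only [not_le] at this; omega
  refine ⟨s, e, Nat.findGreatest_le e, by have := Nat.find_min' hex hk; omega, ?_, ?_, hup,
    fun t h1 h2 => ⟨habove t h1 h2, hbelow t h2⟩⟩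
  · have : 1 ≤ I (s + 1) := by
      rcases Nat.lt_or_ge s e with h | h
      · exact habove _ (by omega) h
      · have := he ▸ Nat.find_spec hex
        have : s = e := le_antisymm (Nat.findGreatest_le e) h
        rw [this]; omega
    rcases hstep s with h | h <;> omega
  · have := he ▸ Nat.find_spec hex
    have := hbelow e le_rfl
    omega

lemma exponent_succ_of_mem_shrinks (hγ0 : 0 < γ) (hγ1 : γ < 1) (hᾱ : 0 < ᾱ)
    (hI : ∀ t, A t x = ᾱ * γ ^ I t) {t : ℕ} (h : x ∈ shrinks A γ t) : I (t + 1) = I t + 1 :=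
  grid_injective hγ0 hγ1 hᾱ (by rw [← hI, show A (t + 1) x = _ from h, hI, mul_grid hγ0])

lemma exponent_succ_of_mem_grows (hγ0 : 0 < γ) (hγ1 : γ < 1) (hᾱ : 0 < ᾱ)
    (hI : ∀ t, A t x = ᾱ * γ ^ I t) {t : ℕ} (h : x ∈ grows A γ (ᾱ * γ ^ j') t) :
    I (t + 1) = max j' (I t - 1) :=
  grid_injective hγ0 hγ1 hᾱ <| by
    rw [← hI, show A (t + 1) x = _ from h, hI, min_inv_mul_grid hγ0 hγ1 hᾱ]

lemma mem_excursion_of_exponent (hγ0 : 0 < γ) (hγ1 : γ < 1) (hᾱ : 0 < ᾱ) (hj' : j' ≤ 0)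
    (hI : ∀ t, A t x = ᾱ * γ ^ I t)
    (hsteps : ∀ t, x ∈ shrinks A γ t ∨ x ∈ grows A γ (ᾱ * γ ^ j') t) {s e : ℕ} (hs : I s = 0)
    (hlevel : ∀ t, s < t → t ≤ e → 1 ≤ I t ∧ I t < L) (heT : e < T x) :
    ∀ d, s + d ≤ e → x ∈ excursion A T γ ᾱ (ᾱ * γ ^ j') L s d (I (s + d))
  | 0, _ => by simp [excursion, hs, hI]
  | d + 1, hd => by
    have ih := mem_excursion_of_exponent hγ0 hγ1 hᾱ hj' hI hsteps hs hlevel heT d (by omega)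
    obtain ⟨h1, hL⟩ := hlevel (s + d + 1) (by omega) (by omega)
    rw [← add_assoc, excursion_succ h1 hL]
    rcases hsteps (s + d) with h | h
    · have := exponent_succ_of_mem_shrinks hγ0 hγ1 hᾱ hI h
      exact Or.inl ⟨⟨by rwa [this, add_sub_cancel_right], h⟩, show s + d < T x by omega⟩
    · have := exponent_succ_of_mem_grows hγ0 hγ1 hᾱ hI h
      exact Or.inr ⟨⟨by rwa [show I (s + d + 1) + 1 = I (s + d) by omega], h⟩,
        show s + d < T x by omega⟩

lemma exists_exponent (hγ0 : 0 < γ) (hγ1 : γ < 1) (hᾱ : 0 < ᾱ)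
    (hsteps : ∀ t, x ∈ shrinks A γ t ∨ x ∈ grows A γ (ᾱ * γ ^ j') t) {j : ℤ}
    (hA0 : A 0 x = ᾱ * γ ^ j) : ∀ t, ∃ m : ℤ, A t x = ᾱ * γ ^ m
  | 0 => ⟨j, hA0⟩
  | t + 1 => by
    obtain ⟨m, hm⟩ := exists_exponent hγ0 hγ1 hᾱ hsteps hA0 t
    rcases hsteps t with h | h
    · exact ⟨m + 1, by rw [show A (t + 1) x = _ from h, hm, mul_grid hγ0]⟩
    · exact ⟨max j' (m - 1), by rw [show A (t + 1) x = _ from h, hm, min_inv_mul_grid hγ0 hγ1 hᾱ]⟩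

lemma exists_mem_crossing (hγ0 : 0 < γ) (hγ1 : γ < 1) (hᾱ : 0 < ᾱ) (hj' : j' ≤ 0)
    (hsteps : ∀ t, x ∈ shrinks A γ t ∨ x ∈ grows A γ (ᾱ * γ ^ j') t) {j : ℤ} (hj : j ≤ 0)
    (hA0 : A 0 x = ᾱ * γ ^ j) (hL : 0 < L) {β : ℝ} (hβL : β ≤ γ ^ ((L : ℤ) - 1)) {k : ℕ}
    (hkT : k ≤ T x) (hAk : A k x < β * ᾱ) :
    ∃ s < k, x ∈ crossing A T γ ᾱ (ᾱ * γ ^ j') L s (k - s) := by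
  choose I hI using exists_exponent hγ0 hγ1 hᾱ hsteps hA0
  have hstep : ∀ t, I (t + 1) = I t + 1 ∨ I (t + 1) = max j' (I t - 1) := fun t =>
    (hsteps t).imp (exponent_succ_of_mem_shrinks hγ0 hγ1 hᾱ hI)
      (exponent_succ_of_mem_grows hγ0 hγ1 hᾱ hI)
  have h0 : I 0 = j := grid_injective hγ0 hγ1 hᾱ (by rw [← hI, hA0])
  have hk : (L : ℤ) ≤ I k := by
    by_contra! h
    have : γ ^ ((L : ℤ) - 1) ≤ γ ^ I k := zpow_le_zpow_right_of_le_one₀ hγ0 hγ1.le (by omega)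
    rw [hI] at hAk
    nlinarith
  obtain ⟨s, e, hse, hek, hs, he, hup, hlevel⟩ :=
    exists_upcrossing hj' (by exact_mod_cast hL) hstep (h0 ▸ hj) hk
  obtain ⟨d, rfl⟩ := Nat.exists_eq_add_of_le hse
  have hexc : x ∈ excursion A T γ ᾱ (ᾱ * γ ^ j') L s d (I (s + d)) :=
    mem_excursion_of_exponent hγ0 hγ1 hᾱ hj' hI hsteps hs hlevel (by omega) d le_rfl
  have hshrinks : x ∈ shrinks A γ (s + d) := (hsteps (s + d)).resolve_right fun h => by
    have := exponent_succ_of_mem_grows hγ0 hγ1 hᾱ hI h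
    omega
  refine ⟨s, by omega, crossing_mono (show d + 1 ≤ k - s by omega) ?_⟩
  exact Or.inr ⟨⟨he ▸ hexc, hshrinks⟩, show s + d < T x by omega⟩

end Path

section Bounds

lemma exists_level {γ β : ℝ} (hγ1 : γ < 1) (hβ0 : 0 < β) (hβ1 : β ≤ 1) :
    ∃ L : ℕ, 0 < L ∧ β ≤ γ ^ ((L : ℤ) - 1) ∧ γ ^ L < β := by
  classical
  have h := exists_pow_lt_of_lt_one hβ0 hγ1
  have hL : 0 < Nat.find h := Nat.pos_of_ne_zero fun h0 => by
    have := Nat.find_spec h; rw [h0, pow_zero] at this; linarith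
  refine ⟨Nat.find h, hL, ?_, Nat.find_spec h⟩
  rw [← Nat.cast_pred hL, zpow_natCast]
  exact not_lt.1 (Nat.find_min h (Nat.pred_lt hL.ne'))

lemma pow_le_rpow_neg {c b γ N e : ℝ} {L : ℕ} (hc0 : 0 < c) (hc1 : c < 1) (hb0 : 0 < b)
    (hb1 : b ≤ 1) (hN : 1 < N) (he : 0 < e) (hγ0 : 0 < γ)
    (hγ : (1 / c) ^ (Real.log b / (e * Real.log N)) ≤ γ) (hL : γ ^ L < b) :
    c ^ L ≤ N ^ (-e) := by
  have hℓ : 0 < e * Real.log N := mul_pos he (Real.log_pos hN)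
  have hlogc : 0 < Real.log (1 / c) := Real.log_pos (by rw [lt_div_iff₀ hc0]; linarith)
  have hlogb : Real.log b ≤ 0 := Real.log_nonpos hb0.le hb1
  have h1 : Real.log b * Real.log (1 / c) ≤ Real.log γ * (e * Real.log N) := by
    have := Real.log_le_log (by positivity) hγ
    rw [Real.log_rpow (by positivity), div_mul_eq_mul_div, div_le_iff₀ hℓ] at this
    exact this
  have h2 : L * Real.log γ < Real.log b := by
    rw [← Real.log_pow]; exact Real.log_lt_log (by positivity) hL
  have hcross : e * Real.log N < L * Real.log (1 / c) := by
    nlinarith [mul_le_mul_of_nonneg_left h1 (Nat.cast_nonneg L : (0 : ℝ) ≤ L),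
      mul_lt_mul_of_pos_right h2 hℓ]
  rw [← Real.log_le_log_iff (by positivity) (by positivity), Real.log_pow,
    Real.log_rpow (by linarith)]
  rw [one_div, Real.log_inv] at hcross
  linarith

lemma natCast_mul_div_pow_le {p q γ β w : ℝ} {n L : ℕ} (hp : 1 / 2 < p) (hp1 : p < 1)
    (hq : q = 1 - p)
    (hγ0 : 0 < γ) (hβ0 : 0 < β) (hβ : β ≤ 1 / 2) (hn : 2 ≤ n) (hw : 0 < w)
    (hγ : (1 / (2 * q)) ^ (Real.log (2 * β) / ((1 + w) * Real.log n)) ≤ γ) (hL : γ ^ L < β) :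
    n * (q / p) ^ L ≤ (n : ℝ) ^ (-w) := by
  have hn0 : (0 : ℝ) < n := by positivity
  have hqp : q / p ≤ 2 * q := by rw [div_le_iff₀ (by linarith)]; nlinarith
  calc (n : ℝ) * (q / p) ^ L ≤ n * (2 * q) ^ L :=
        mul_le_mul_of_nonneg_left (pow_le_pow_left₀ (div_pos (by linarith) (by linarith)).le hqp L)
          hn0.le
    _ ≤ n * (n : ℝ) ^ (-(1 + w)) := by
        gcongr
        exact pow_le_rpow_neg (by linarith) (by linarith) (by linarith) (by linarith)
          (by exact_mod_cast hn) (by linarith) hγ0 hγ (hL.trans (by linarith))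
    _ = (n : ℝ) ^ (-w) := by
        rw [show -w = 1 + -(1 + w) by ring, Real.rpow_add hn0, Real.rpow_one]

variable {Ω : Type*} {mΩ : MeasurableSpace Ω} {μ : Measure Ω}
  {F : Filtration ℕ mΩ} {A : ℕ → Ω → ℝ} {T : Ω → ℕ} {γ ᾱ p q : ℝ} {j' : ℤ} {L s : ℕ}

lemma measure_crossing_le [IsProbabilityMeasure μ] (hA : Adapted F A)
    (hT : IsStoppingTime F fun x => (T x : WithTop ℕ))
    (hγ0 : 0 < γ) (hγ1 : γ < 1) (hᾱ : 0 < ᾱ) (hj' : j' ≤ 0)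
    (hpq : p + q = 1) (hqp : q ≤ p) (hq : 0 < q)
    (hcond : ∀ k, ∀ᵐ x ∂μ, (k < T x ∧ A k x ≤ ᾱ) →
      p ≤ μ[(grows A γ (ᾱ * γ ^ j') k).indicator (fun _ => (1 : ℝ)) | F k] x)
    (hL : 0 < L) (d : ℕ) :
    μ (crossing A T γ ᾱ (ᾱ * γ ^ j') L s d) ≤ ENNReal.ofReal ((q / p) ^ L) := by
  have hpot := potential_le_one (s := s) hA hT hγ0 hγ1 hᾱ hj' hpq hqp hq hcond hL d
  have hr : 0 < p / q := div_pos (hq.trans_le hqp) hq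
  have hsum : 0 ≤ ∑ i ∈ Finset.range L,
      (p / q) ^ i * μ.real (excursion A T γ ᾱ (ᾱ * γ ^ j') L s d i) :=
    Finset.sum_nonneg fun i _ => mul_nonneg (pow_nonneg hr.le i) measureReal_nonneg
  rw [← ofReal_measureReal]
  refine ENNReal.ofReal_le_ofReal ?_
  rw [show (q / p) ^ L = 1 / (p / q) ^ L by rw [one_div, ← inv_pow, inv_div],
    le_div_iff₀' (pow_pos hr L)]
  linarith

lemma measure_exists_lt_le [IsProbabilityMeasure μ] (hA : Adapted F A)
    (hT : IsStoppingTime F fun x => (T x : WithTop ℕ))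
    (hγ0 : 0 < γ) (hγ1 : γ < 1) (hᾱ : 0 < ᾱ) (hj' : j' ≤ 0)
    (hpq : p + q = 1) (hqp : q ≤ p) (hq : 0 < q)
    (hsteps : ∀ᵐ x ∂μ, ∀ t, x ∈ shrinks A γ t ∨ x ∈ grows A γ (ᾱ * γ ^ j') t)
    (hcond : ∀ k, ∀ᵐ x ∂μ, (k < T x ∧ A k x ≤ ᾱ) →
      p ≤ μ[(grows A γ (ᾱ * γ ^ j') k).indicator (fun _ => (1 : ℝ)) | F k] x)
    {j : ℤ} (hj : j ≤ 0) (hA0 : ∀ x, A 0 x = ᾱ * γ ^ j)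
    (hL : 0 < L) {β : ℝ} (hβL : β ≤ γ ^ ((L : ℤ) - 1)) (n : ℕ) :
    μ {x | ∃ k ≤ n, k ≤ T x ∧ A k x < β * ᾱ} ≤ ENNReal.ofReal (n * (q / p) ^ L) := by
  calc μ {x | ∃ k ≤ n, k ≤ T x ∧ A k x < β * ᾱ}
      ≤ μ (⋃ s ∈ Finset.range n, crossing A T γ ᾱ (ᾱ * γ ^ j') L s (n - s)) := by
        refine measure_mono_ae ?_
        filter_upwards [hsteps] with x hx ⟨k, hkn, hkT, hAk⟩
        obtain ⟨s, hsk, hmem⟩ := exists_mem_crossing hγ0 hγ1 hᾱ hj' hx hj (hA0 x) hL hβL hkT hAk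
        exact Set.mem_biUnion (Finset.mem_range.2 (by omega)) (crossing_mono (by omega) hmem)
    _ ≤ ∑ s ∈ Finset.range n, μ (crossing A T γ ᾱ (ᾱ * γ ^ j') L s (n - s)) :=
        measure_biUnion_finset_le _ _
    _ ≤ ∑ s ∈ Finset.range n, ENNReal.ofReal ((q / p) ^ L) := Finset.sum_le_sum fun s _ =>
        measure_crossing_le hA hT hγ0 hγ1 hᾱ hj' hpq hqp hq hcond hL _
    _ = ENNReal.ofReal (n * (q / p) ^ L) := by
        rw [Finset.sum_const, Finset.card_range, nsmul_eq_mul, ENNReal.ofReal_mul n.cast_nonneg,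
          ENNReal.ofReal_natCast]

lemma ofReal_one_sub_le_measure [IsProbabilityMeasure μ] {S : Set Ω} {a : ℝ} (ha : 0 ≤ a)
    (h : μ Sᶜ ≤ ENNReal.ofReal a) : ENNReal.ofReal (1 - a) ≤ μ S := by
  rw [ENNReal.ofReal_sub _ ha, ENNReal.ofReal_one, tsub_le_iff_right]
  calc 1 = μ (S ∪ Sᶜ) := by rw [Set.union_compl_self, measure_univ]
    _ ≤ μ S + μ Sᶜ := measure_union_le _ _
    _ ≤ μ S + ENNReal.ofReal a := by gcongr

lemma sum_oracleCost_le {c₀ c₁ κ τ ᾱ β : ℝ} (hc₀ : 0 ≤ c₀) (hc₁ : 0 ≤ c₁) (hκ : 0 < κ)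
    (hτ : κ * ᾱ ≤ τ) (hᾱ : 0 < ᾱ) (hβ0 : 0 < β) (hβ1 : β ≤ 1) {α : ℕ → ℝ} {m n : ℕ}
    (hmn : m ≤ n) (hα : ∀ k ∈ Finset.Icc 1 m, β * ᾱ ≤ α k) :
    ∑ k ∈ Finset.Icc 1 m, (c₀ + c₁ / (min τ (κ * α k)) ^ 2) ≤
      n * (c₀ + c₁ / (κ * β * ᾱ) ^ 2) := by
  have hterm : ∀ k ∈ Finset.Icc 1 m,
      c₀ + c₁ / (min τ (κ * α k)) ^ 2 ≤ c₀ + c₁ / (κ * β * ᾱ) ^ 2 := by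
    intro k hk
    have hmin : κ * β * ᾱ ≤ min τ (κ * α k) :=
      le_min (by nlinarith [mul_pos hκ hᾱ])
        (by rw [mul_assoc]; exact mul_le_mul_of_nonneg_left (hα k hk) hκ.le)
    gcongr
  calc ∑ k ∈ Finset.Icc 1 m, (c₀ + c₁ / (min τ (κ * α k)) ^ 2)
      ≤ (Finset.Icc 1 m).card • (c₀ + c₁ / (κ * β * ᾱ) ^ 2) := Finset.sum_le_card_nsmul _ _ _ hterm
    _ = m * (c₀ + c₁ / (κ * β * ᾱ) ^ 2) := by
        rw [Nat.card_Icc, add_tsub_cancel_right, nsmul_eq_mul]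
    _ ≤ n * (c₀ + c₁ / (κ * β * ᾱ) ^ 2) := by gcongr

lemma compl_setOf_sum_oracleCost_le_subset {c₀ c₁ κ τ β : ℝ} (hc₀ : 0 ≤ c₀) (hc₁ : 0 ≤ c₁)
    (hκ : 0 < κ) (hτ : κ * ᾱ ≤ τ) (hᾱ : 0 < ᾱ) (hβ0 : 0 < β) (hβ1 : β ≤ 1) (n : ℕ) :
    {x | T x ≤ n ∧ ∑ k ∈ Finset.Icc 1 (T x), (c₀ + c₁ / (min τ (κ * A k x)) ^ 2) ≤
        n * (c₀ + c₁ / (κ * β * ᾱ) ^ 2)}ᶜ ⊆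
      {x | n < T x} ∪ {x | ∃ k ≤ n, k ≤ T x ∧ A k x < β * ᾱ} := by
  intro x hx
  by_contra h
  simp only [Set.mem_union, Set.mem_ofPred_eq, not_or, not_lt, not_exists, not_and] at h
  exact hx ⟨h.1, sum_oracleCost_le hc₀ hc₁ hκ hτ hᾱ hβ0 hβ1 h.1 fun k hk =>
    h.2 k ((Finset.mem_Icc.1 hk).2.trans h.1) (Finset.mem_Icc.1 hk).2⟩

end Bounds

end StepSearch

open StepSearch in
theorem stmt_17_general
    {Ω : Type*} [mΩ : MeasurableSpace Ω] (μ : Measure Ω) [IsProbabilityMeasure μ]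
    (F : Filtration ℕ mΩ)
    (γ ᾱ p q : ℝ) (hγ0 : 0 < γ) (hγ1 : γ < 1) (hᾱ : 0 < ᾱ)
    (hp : 1/2 < p) (hp1 : p < 1) (hq : q = 1 - p)
    (αmax : ℝ) (j' : ℤ) (hj' : j' ≤ 0) (hαmax : αmax = ᾱ * γ ^ j')
    (A : ℕ → Ω → ℝ) (hadp : Adapted F A)
    (T : Ω → ℕ) (hT : IsStoppingTime F (fun x => (T x : WithTop ℕ)))
    (j : ℤ) (hj : j ≤ 0) (hA0 : ∀ x, A 0 x = ᾱ * γ ^ j)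
    (hstep : ∀ k, ∀ᵐ x ∂μ,
      A (k+1) x = γ * A k x ∨ A (k+1) x = min αmax (γ⁻¹ * A k x))
    (hcond : ∀ k, ∀ᵐ x ∂μ, (k < T x ∧ A k x ≤ ᾱ) →
      p ≤ (μ[Set.indicator {x' | A (k+1) x' = min αmax (γ⁻¹ * A k x')}
              (fun _ => (1:ℝ)) | F k]) x)
    (c₀ c₁ κ τ : ℝ) (hc₀ : 0 ≤ c₀) (hc₁ : 0 ≤ c₁) (hκ : 0 < κ) (hτ : κ * ᾱ ≤ τ)
    (n : ℕ) (hn : 2 ≤ n)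
    (η : ℝ) (hη0 : 0 ≤ η) (hTn : μ {x | n < T x} ≤ ENNReal.ofReal η)
    (w : ℝ) (hw : 0 < w) (β : ℝ) (hβ0 : 0 < β) (hβ : β ≤ 1/2)
    (hγbig : max (1/2) ((1/(2*q)) ^ (Real.log (2*β) / ((1 + w) * Real.log n))) ≤ γ) :
    ENNReal.ofReal (1 - η - (n : ℝ) ^ (-w)
        - (2 * Real.sqrt (p*q) / (1 - 2 * Real.sqrt (p*q))^2) * (n : ℝ) ^ (-(1 + w))) ≤
      μ {x | T x ≤ n ∧
        ∑ k ∈ Finset.Icc 1 (T x), (c₀ + c₁ / (min τ (κ * A k x))^2) ≤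
          (n : ℝ) * (c₀ + c₁ / (κ * β * ᾱ)^2)} := by
  subst hαmax
  obtain ⟨L, hL, hβL, hγL⟩ := exists_level hγ1 hβ0 (by linarith)
  have hbad :=
    natCast_mul_div_pow_le hp hp1 hq hγ0 hβ0 hβ hn hw ((le_max_right _ _).trans hγbig) hγL
  have hlow := measure_exists_lt_le hadp hT hγ0 hγ1 hᾱ hj' (q := q) (by linarith) (by linarith)
    (by linarith) (ae_all_iff.2 hstep) hcond hj hA0 hL hβL n
  refine (ENNReal.ofReal_le_ofReal ?_).trans
    (ofReal_one_sub_le_measure (a := η + (n : ℝ) ^ (-w)) (by positivity) ?_)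
  · have : 0 ≤ 2 * √(p * q) / (1 - 2 * √(p * q)) ^ 2 * (n : ℝ) ^ (-(1 + w)) := by positivity
    linarith
  calc _ ≤ μ ({x | n < T x} ∪ {x | ∃ k ≤ n, k ≤ T x ∧ A k x < β * ᾱ}) :=
        measure_mono (compl_setOf_sum_oracleCost_le_subset hc₀ hc₁ hκ hτ hᾱ hβ0 (by linarith) n)
    _ ≤ ENNReal.ofReal η + ENNReal.ofReal ((n : ℝ) ^ (-w)) :=
        (measure_union_le _ _).trans (add_le_add hTn (hlow.trans (ENNReal.ofReal_le_ofReal hbad)))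
    _ = ENNReal.ofReal (η + (n : ℝ) ^ (-w)) := (ENNReal.ofReal_add hη0 (by positivity)).symm

/-- High-probability total sample complexity of SASS: with
`oc(α) = c₀ + c₁/(min{τ, κ·α})²`, `τ ≥ κ·ᾱ`, `μ(T > n) ≤ η`, `0 < β ≤ 1/2` and
`γ ≥ max{1/2, (1/(2q))^{log(2β)/((1+ω)·log n)}}`, with probability at least
`1 − η − n^{−ω} − c·n^{−(1+ω)}` we have `T ≤ n` and
`TOC(T) ≤ n·(c₀ + c₁/(κ·β·ᾱ)²)`. -/
theorem stmt_17
    {Ω : Type*} [mΩ : MeasurableSpace Ω] (μ : Measure Ω) [IsProbabilityMeasure μ]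
    (F : Filtration ℕ mΩ)
    (γ ᾱ p q : ℝ) (hγ0 : 0 < γ) (hγ1 : γ < 1) (hᾱ : 0 < ᾱ)
    (hp : 1/2 < p) (hp1 : p < 1) (hq : q = 1 - p)
    (αmax : ℝ) (j' : ℤ) (hj' : j' ≤ 0) (hαmax : αmax = ᾱ * γ ^ j')
    (A : ℕ → Ω → ℝ) (hadp : Adapted F A) (hpos : ∀ k x, 0 < A k x)
    (T : Ω → ℕ) (hT : IsStoppingTime F (fun x => (T x : WithTop ℕ)))
    (j : ℤ) (hj : j ≤ 0) (hA0 : ∀ x, A 0 x = ᾱ * γ ^ j)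
    (hstep : ∀ k, ∀ᵐ x ∂μ,
      A (k+1) x = γ * A k x ∨ A (k+1) x = min αmax (γ⁻¹ * A k x))
    (hcond : ∀ k, ∀ᵐ x ∂μ, (k < T x ∧ A k x ≤ ᾱ) →
      p ≤ (μ[Set.indicator {x' | A (k+1) x' = min αmax (γ⁻¹ * A k x')}
              (fun _ => (1:ℝ)) | F k]) x)
    (c₀ c₁ κ τ : ℝ) (hc₀ : 0 ≤ c₀) (hc₁ : 0 ≤ c₁) (hκ : 0 < κ) (hτ : κ * ᾱ ≤ τ)
    (n : ℕ) (hn : 2 ≤ n)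
    (η : ℝ) (hη0 : 0 ≤ η) (hη1 : η ≤ 1) (hTn : μ {x | n < T x} ≤ ENNReal.ofReal η)
    (w : ℝ) (hw : 0 < w) (β : ℝ) (hβ0 : 0 < β) (hβ : β ≤ 1/2)
    (hγbig : max (1/2) ((1/(2*q)) ^ (Real.log (2*β) / ((1 + w) * Real.log n))) ≤ γ) :
    ENNReal.ofReal (1 - η - (n : ℝ) ^ (-w)
        - (2 * Real.sqrt (p*q) / (1 - 2 * Real.sqrt (p*q))^2) * (n : ℝ) ^ (-(1 + w))) ≤
      μ {x | T x ≤ n ∧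
        ∑ k ∈ Finset.Icc 1 (T x), (c₀ + c₁ / (min τ (κ * A k x))^2) ≤
          (n : ℝ) * (c₀ + c₁ / (κ * β * ᾱ)^2)} :=
  stmt_17_general (mΩ := mΩ) μ F γ ᾱ p q hγ0 hγ1 hᾱ hp hp1 hq αmax j' hj' hαmax A hadp T hT j hj hA0
    hstep hcond c₀ c₁ κ τ hc₀ hc₁ hκ hτ n hn η hη0 hTn w hw β hβ0 hβ hγbig
end
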